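/- arXiv:2305.02672 — 4 statements merged into one kernel-verified Lean document; each statement's English description precedes it below -/
import Mathlib

section
/- For every natural number n ≥ 1, the following are equivalent: (a) there exists a finite φ-representation a of n with a(1) = a(0) = 1, a(−1) = 0, and a(i)·a(i+1) = 0 for every i ∈ ℤ with i ≠ 0 (i.e., n admits a Dekking–Van Loon expansion that differs from its canonical φ-representation); (b) there exists an integer m ≥ 1 with n = ⌊(φ+2)·m⌋. -/
/-- The golden ratio φ = (1+√5)/2. -/
noncomputable def phi : ℝ := (1 + Real.sqrt 5) / 2

/-- `a` is a finite φ-representation of the real number `x`: a finitely supported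
function `a : ℤ → {0,1}` with `x = Σ_{i ∈ ℤ} a(i) · φ^i`. -/
def IsPhiRep (x : ℝ) (a : ℤ →₀ ℕ) : Prop :=
  (∀ i, a i ≤ 1) ∧ x = ∑ i ∈ a.support, (a i : ℝ) * phi ^ i

/-- `a` is the canonical φ-representation of `x`: a finite φ-representation with
no two adjacent digits equal to 1. -/
def IsCanonRep (x : ℝ) (a : ℤ →₀ ℕ) : Prop :=
  IsPhiRep x a ∧ ∀ i : ℤ, a i * a (i + 1) = 0

/-!
Write the digits of a DVL expansion with `a 1 = a 0 = 1`, `a (-1) = a 2 = 0` as ones at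
positions `0`, `1`, `j + 1` for `j ∈ Z` and `-k` for `k ∈ N`, where `Z, N ⊆ [2, ∞)`.
Since `φ ^ (j + 1) + ψ ^ (j + 1) = fib j + fib (j + 2)` is a Lucas number and `1 + φ + ψ ^ 2 = 3`,
the value is an integer `K` plus the defect `∑ k ∈ N, φ⁻¹ ^ k - ψ ^ 2 - ∑ j ∈ Z, ψ ^ (j + 1)`,
which lies in `(-1, 1)`. So the value is an integer exactly when the defect vanishes, and then it
is `K`. On the other hand `(φ + 2) * fib j = φ ^ (j + 1) + φ ^ 2 * ψ ^ (j + 1)`, and the conjugate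
terms are too small to move the floor, so `⌊(φ + 2) * m⌋ = K` for `m = 1 + ∑ j ∈ Z, fib j`.

Conversely, for `m ≥ 1` take `Z` from the Zeckendorf representation of `m - 1`. A sparse `N` with
vanishing defect is built by adding the elements of `Z` in increasing order: with `x = φ⁻¹`
(so `ψ = -x` and `x + x ^ 2 = 1`), an even power `x ^ q` is a new digit, and an odd one is
absorbed into the current largest digit `x ^ e` by `x ^ e = x ^ (e + 1) + x ^ (e + 2)`.
-/

open Finset Real
open scoped goldenRatio

def IsSparse (s : Finset ℕ) : Prop := ∀ k ∈ s, k + 1 ∉ s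

namespace IsSparse

variable {s t : Finset ℕ}

theorem mono (ht : IsSparse t) (h : s ⊆ t) : IsSparse s :=
  fun k hk hk1 ↦ ht k (h hk) (h hk1)

theorem union (hs : IsSparse s) (ht : IsSparse t) (hst : ∀ a ∈ s, ∀ b ∈ t, a + 2 ≤ b) :
    IsSparse (s ∪ t) := by
  intro k hk hk1
  rcases mem_union.1 hk with hk | hk <;> rcases mem_union.1 hk1 with hk1 | hk1
  · exact hs k hk hk1
  · have := hst k hk _ hk1; omega
  · have := hst _ hk1 k hk; omega
  · exact ht k hk hk1

theorem singleton (a : ℕ) : IsSparse {a} := by simp [IsSparse]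

theorem image_range_odd (e s : ℕ) : IsSparse ((range s).image fun t ↦ e + 2 * t + 1) := by
  simp only [IsSparse, mem_image, mem_range]
  rintro _ ⟨t, -, rfl⟩ ⟨u, -, h⟩
  omega

end IsSparse

theorem Nat.exists_isSparse_sum_fib (n : ℕ) :
    ∃ Z : Finset ℕ, IsSparse Z ∧ (∀ j ∈ Z, 2 ≤ j) ∧ ∑ j ∈ Z, Nat.fib j = n := by
  have : Trans (fun a b : ℕ ↦ b + 2 ≤ a) (fun a b ↦ b + 2 ≤ a) (fun a b ↦ b + 2 ≤ a) :=
    ⟨fun h h' ↦ by omega⟩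
  obtain ⟨hl, -, h0⟩ :=
    List.pairwise_append.1 (List.isChain_iff_pairwise.1 (Nat.isZeckendorfRep_zeckendorf n))
  have : Std.Symm fun a b : ℕ ↦ b + 2 ≤ a ∨ a + 2 ≤ b := ⟨fun _ _ ↦ Or.symm⟩
  have hsep := (hl.imp (S := fun a b ↦ b + 2 ≤ a ∨ a + 2 ≤ b) Or.inl).forall
  refine ⟨n.zeckendorf.toFinset, fun k hk hk1 ↦ ?_, fun j hj ↦ ?_, ?_⟩
  · have := hsep (List.mem_toFinset.1 hk) (List.mem_toFinset.1 hk1) (by omega)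
    omega
  · simpa using h0 j (List.mem_toFinset.1 hj) 0 (by simp)
  · rw [List.sum_toFinset _ (hl.imp fun h ↦ by omega), Nat.sum_zeckendorf_fib]

section Semiring

variable {R : Type*} [Semiring R]

theorem sum_pow_mem_of_mapsTo {S : Set R} {x : R} (h0 : 0 ∈ S) (hmul : Set.MapsTo (x * ·) S S)
    (hadd : Set.MapsTo (1 + x * ·) S S) (T : Finset ℕ) : ∑ k ∈ T, x ^ k ∈ S := by
  classical
  suffices h : ∀ n (d : ℕ → Prop) [DecidablePred d],
      ∑ k ∈ range n, (if d k then x ^ k else 0) ∈ S by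
    obtain ⟨n, hn⟩ := T.exists_nat_subset_range
    simpa [sum_ite_mem, inter_eq_right.2 hn] using h n (· ∈ T)
  intro n
  induction n with
  | zero => simpa
  | succ n ih =>
    intro d _
    have hsplit : ∑ k ∈ range (n + 1), (if d k then x ^ k else 0) =
        (if d 0 then 1 else 0) + x * ∑ k ∈ range n, (if d (k + 1) then x ^ k else 0) := by
      rw [sum_range_succ', mul_sum, add_comm]
      simp [pow_succ', mul_ite]
    rw [hsplit]
    split_ifs
    · exact hadd (ih _)
    · simpa using hmul (ih _)

theorem sum_pow_eq_pow_mul_sum_image_sub (x : R) {T : Finset ℕ} {c : ℕ} (hT : ∀ k ∈ T, c ≤ k) :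
    ∑ k ∈ T, x ^ k = x ^ c * ∑ k ∈ T.image (· - c), x ^ k := by
  rw [sum_image fun a ha b hb h ↦ by have := hT a ha; have := hT b hb; omega, mul_sum]
  exact sum_congr rfl fun k hk ↦ by rw [← pow_add, Nat.add_sub_cancel' (hT k hk)]

theorem pow_eq_pow_add_one_add_pow_add_two {x : R} (hx : x + x ^ 2 = 1) (e : ℕ) :
    x ^ e = x ^ (e + 1) + x ^ (e + 2) := by
  rw [pow_succ, pow_add, ← mul_add, hx, mul_one]

theorem pow_eq_sum_range_add {x : R} (hx : x + x ^ 2 = 1) (e s : ℕ) :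
    x ^ e = ∑ t ∈ range s, x ^ (e + 2 * t + 1) + x ^ (e + 2 * s + 1) + x ^ (e + 2 * s + 2) := by
  induction s with
  | zero => simpa using pow_eq_pow_add_one_add_pow_add_two hx e
  | succ s ih =>
    rw [ih, pow_eq_pow_add_one_add_pow_add_two hx (e + 2 * s + 2), sum_range_succ,
      show e + 2 * (s + 1) + 1 = e + 2 * s + 2 + 1 by ring,
      show e + 2 * (s + 1) + 2 = e + 2 * s + 2 + 2 by ring]
    abel

end Semiring

theorem goldenRatio_pow_add_goldenConj_pow (j : ℕ) :
    φ ^ (j + 1) + ψ ^ (j + 1) = Nat.fib j + Nat.fib (j + 2) := by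
  have h : (Nat.fib (j + 2) : ℝ) = Nat.fib j + Nat.fib (j + 1) := by exact_mod_cast Nat.fib_add_two
  linear_combination h - fib_succ_sub_goldenConj_mul_fib (j + 1)
    - fib_succ_sub_goldenRatio_mul_fib (j + 1) - (Nat.fib (j + 1) : ℝ) * goldenRatio_add_goldenConj

theorem goldenRatio_add_two_mul_fib (j : ℕ) :
    (φ + 2) * Nat.fib j = φ ^ (j + 1) + φ ^ 2 * ψ ^ (j + 1) := by
  have h : (Nat.fib (j + 2) : ℝ) = Nat.fib j + Nat.fib (j + 1) := by exact_mod_cast Nat.fib_add_two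
  linear_combination fib_succ_sub_goldenConj_mul_fib (j + 1)
    + φ ^ 2 * fib_succ_sub_goldenRatio_mul_fib (j + 1) - (1 + φ ^ 2) * h
    + (φ * Nat.fib (j + 1) - Nat.fib j) * goldenRatio_sq
    + (Nat.fib (j + 1) : ℝ) * goldenRatio_add_goldenConj

theorem sum_goldenConj_pow_mem_Ioo (T : Finset ℕ) : ∑ k ∈ T, ψ ^ k ∈ Set.Ioo (-1) φ := by
  have hψ := goldenConj_neg
  have hφψ := goldenRatio_mul_goldenConj
  have hφ := one_sub_goldenConj
  refine sum_pow_mem_of_mapsTo (show (0 : ℝ) ∈ Set.Ioo (-1) φ from ⟨by linarith, goldenRatio_pos⟩)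
    ?_ ?_ T <;>
    rintro y ⟨hy₁, hy₂⟩ <;> constructor <;> dsimp only <;> nlinarith

theorem sum_goldenConj_pow_succ_mem_Ioo {Z : Finset ℕ} (hZ : ∀ j ∈ Z, 2 ≤ j) :
    ∑ j ∈ Z, ψ ^ (j + 1) ∈ Set.Ioo (-ψ ^ 2) (-ψ ^ 3) := by
  obtain ⟨hy₁, hy₂⟩ : _ ∈ Set.Ioo _ _ := sum_goldenConj_pow_mem_Ioo (Z.image (· - 2))
  have hψ := goldenConj_neg
  have hφψ := goldenRatio_mul_goldenConj
  simp_rw [pow_succ _ _, ← sum_mul, sum_pow_eq_pow_mul_sum_image_sub ψ hZ]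
  constructor <;> nlinarith [pow_pos (neg_pos.2 hψ) 3]

theorem sum_inv_goldenRatio_pow_lt_one {N : Finset ℕ} (hN : ∀ k ∈ N, 2 ≤ k) :
    ∑ k ∈ N, φ⁻¹ ^ k < 1 := by
  have hφ := goldenRatio_pos
  have hφ₁ : φ⁻¹ * φ = 1 := inv_mul_cancel₀ goldenRatio_ne_zero
  have hy : ∑ k ∈ N.image (· - 2), φ⁻¹ ^ k < φ ^ 2 := by
    refine sum_pow_mem_of_mapsTo (S := Set.Iio (φ ^ 2)) (show (0 : ℝ) < φ ^ 2 by positivity)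
      ?_ ?_ _ <;>
      intro y (hy : y < φ ^ 2) <;> simp only [Set.mem_Iio] <;>
      nlinarith [goldenRatio_sq, one_lt_goldenRatio, inv_pos.2 hφ]
  rw [sum_pow_eq_pow_mul_sum_image_sub _ hN]
  calc φ⁻¹ ^ 2 * ∑ k ∈ N.image (· - 2), φ⁻¹ ^ k < φ⁻¹ ^ 2 * φ ^ 2 := by gcongr
    _ = 1 := by rw [← mul_pow, hφ₁, one_pow]

/-- The value of the digits `1` at positions `0`, `1`, `j + 1` for `j ∈ Z` and `-k` for `k ∈ N`. -/
noncomputable def dvlValue (Z N : Finset ℕ) : ℝ :=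
  1 + φ + ∑ j ∈ Z, φ ^ (j + 1) + ∑ k ∈ N, φ⁻¹ ^ k

theorem natCast_sum_fib_add_fib (Z : Finset ℕ) :
    ((∑ j ∈ Z, (Nat.fib j + Nat.fib (j + 2)) : ℕ) : ℝ) =
      ∑ j ∈ Z, φ ^ (j + 1) + ∑ j ∈ Z, ψ ^ (j + 1) := by
  push_cast
  rw [← sum_add_distrib]
  exact sum_congr rfl fun j _ ↦ (goldenRatio_pow_add_goldenConj_pow j).symm

theorem dvlValue_eq (Z N : Finset ℕ) :
    dvlValue Z N = ((3 + ∑ j ∈ Z, (Nat.fib j + Nat.fib (j + 2)) : ℕ) : ℝ) +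
      (∑ k ∈ N, φ⁻¹ ^ k - (ψ ^ 2 + ∑ j ∈ Z, ψ ^ (j + 1))) := by
  rw [dvlValue, Nat.cast_add, natCast_sum_fib_add_fib]
  linear_combination goldenConj_sq - goldenRatio_add_goldenConj

theorem eq_of_intCast_eq_dvlValue {Z N : Finset ℕ} (hZ : ∀ j ∈ Z, 2 ≤ j) (hN : ∀ k ∈ N, 2 ≤ k)
    {n : ℤ} (h : (n : ℝ) = dvlValue Z N) :
    n = ((3 + ∑ j ∈ Z, (Nat.fib j + Nat.fib (j + 2)) : ℕ) : ℤ) := by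
  obtain ⟨hA₁, hA₂⟩ := sum_goldenConj_pow_succ_mem_Ioo hZ
  have hB₀ : 0 ≤ ∑ k ∈ N, φ⁻¹ ^ k := sum_nonneg fun k _ ↦ by positivity
  have hB₁ := sum_inv_goldenRatio_pow_lt_one hN
  have hψ₃ : ψ ^ 3 = 2 * ψ + 1 := by linear_combination (ψ + 1) * goldenConj_sq
  rw [dvlValue_eq] at h
  have hlt : |((n - ((3 + ∑ j ∈ Z, (Nat.fib j + Nat.fib (j + 2)) : ℕ) : ℤ) : ℤ) : ℝ)| < 1 := by
    rw [abs_lt]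
    push_cast at h ⊢
    constructor <;> nlinarith [neg_one_lt_goldenConj, goldenConj_sq]
  have := Int.abs_lt_one_iff.1 (by exact_mod_cast hlt)
  omega

theorem floor_goldenRatio_add_two_mul {Z : Finset ℕ} (hZ : ∀ j ∈ Z, 2 ≤ j) :
    ⌊(φ + 2) * ((1 + ∑ j ∈ Z, Nat.fib j : ℕ) : ℝ)⌋ =
      ((3 + ∑ j ∈ Z, (Nat.fib j + Nat.fib (j + 2)) : ℕ) : ℤ) := by
  obtain ⟨hA₁, hA₂⟩ := sum_goldenConj_pow_succ_mem_Ioo hZ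
  have hm : (φ + 2) * ((1 + ∑ j ∈ Z, Nat.fib j : ℕ) : ℝ) =
      φ + 2 + ∑ j ∈ Z, φ ^ (j + 1) + φ ^ 2 * ∑ j ∈ Z, ψ ^ (j + 1) := by
    push_cast
    simp_rw [mul_add, mul_sum, goldenRatio_add_two_mul_fib, sum_add_distrib]
    ring
  rw [Int.floor_eq_iff, hm, Int.cast_natCast, Nat.cast_add, natCast_sum_fib_add_fib]
  set A := ∑ j ∈ Z, ψ ^ (j + 1)
  have h₁ : 0 < φ * (A + ψ ^ 2) := mul_pos goldenRatio_pos (by linarith)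
  have h₂ : 0 < φ * (-ψ ^ 3 - A) := mul_pos goldenRatio_pos (by linarith)
  have h₃ : φ * ψ ^ 2 = -ψ := by linear_combination ψ * goldenRatio_mul_goldenConj
  have h₄ : φ * ψ ^ 3 = -ψ ^ 2 := by linear_combination ψ ^ 2 * goldenRatio_mul_goldenConj
  have h₅ : φ ^ 2 * A = φ * A + A := by linear_combination A * goldenRatio_sq
  push_cast
  constructor <;> linarith [goldenConj_sq, goldenRatio_add_goldenConj]

/-- `L ∪ {e}` is the set `N` under construction: sparse, in `[2, e]`, with even maximum `e`. -/
structure EvenCapped (L : Finset ℕ) (e : ℕ) : Prop where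
  sparse : IsSparse L
  even : Even e
  two_le : 2 ≤ e
  bounds : ∀ k ∈ L, 2 ≤ k ∧ k + 2 ≤ e

section CommRing

variable {R : Type*} [CommRing R] {x : R}

theorem EvenCapped.exists_step (hx : x + x ^ 2 = 1) {L : Finset ℕ} {e q : ℕ}
    (hL : EvenCapped L e) (heq : e < q) :
    ∃ L' e', EvenCapped L' e' ∧ e' ≤ q + 1 ∧
      ∑ k ∈ L', x ^ k + x ^ e' = ∑ k ∈ L, x ^ k + x ^ e + (-x) ^ q := by
  have he := Nat.even_iff.1 hL.even
  have he2 := hL.two_le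
  have hdisj (T : Finset ℕ) (hT : ∀ k ∈ T, e ≤ k) : Disjoint L T :=
    disjoint_left.2 fun k hk hk' ↦ by have := hL.bounds k hk; have := hT k hk'; omega
  rcases Nat.even_or_odd q with hq | hq
  · have hq' := Nat.even_iff.1 hq
    refine ⟨L ∪ {e}, q, ⟨hL.sparse.union (.singleton e) ?_, hq, by omega, ?_⟩, by omega, ?_⟩
    · simpa using fun k hk ↦ (hL.bounds k hk).2
    · simp only [mem_union, mem_singleton]
      rintro k (hk | rfl)
      · have := hL.bounds k hk; omega
      · omega
    · rw [sum_union (hdisj _ (by simp)), sum_singleton, hq.neg_pow]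
  · -- `x ^ e - x ^ q = x ^ (e + 1) + x ^ (e + 3) + ⋯ + x ^ (q - 2) + x ^ (q + 1)`
    obtain ⟨s, rfl⟩ : ∃ s, q = e + 2 * s + 1 :=
      ⟨(q - e - 1) / 2, by have := Nat.odd_iff.1 hq; omega⟩
    set C := (range s).image fun t ↦ e + 2 * t + 1
    have hC : ∀ k ∈ C, e + 1 ≤ k ∧ k + 2 ≤ e + 2 * s + 1 := by
      simp only [C, mem_image, mem_range]
      rintro _ ⟨t, ht, rfl⟩
      omega
    refine ⟨L ∪ C, e + 2 * s + 2, ⟨hL.sparse.union (.image_range_odd e s) ?_,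
      Nat.even_iff.2 (by omega), by omega, ?_⟩, by omega, ?_⟩
    · intro a ha b hb; have := hL.bounds a ha; have := hC b hb; omega
    · intro k hk
      rcases mem_union.1 hk with hk | hk
      · have := hL.bounds k hk; omega
      · have := hC k hk; omega
    · rw [sum_union (hdisj _ fun k hk ↦ by have := hC k hk; omega),
        sum_image fun a _ b _ h ↦ by omega, hq.neg_pow, pow_eq_sum_range_add hx e s]
      ring

theorem exists_evenCapped_sum_pow_eq (hx : x + x ^ 2 = 1) {Z : Finset ℕ} (hZ : IsSparse Z)
    (hZ2 : ∀ j ∈ Z, 2 ≤ j) : ∃ L e, EvenCapped L e ∧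
      (∀ j, 2 ≤ j → (∀ i ∈ Z, i + 2 ≤ j) → e ≤ j) ∧
      ∑ k ∈ L, x ^ k + x ^ e = x ^ 2 + ∑ j ∈ Z, (-x) ^ (j + 1) := by
  induction Z using Finset.induction_on_max with
  | empty =>
    exact ⟨∅, 2, ⟨by simp [IsSparse], even_two, le_rfl, by simp⟩, fun j hj _ ↦ hj, by simp⟩
  | insert j s hlt ih =>
    have hgap : ∀ i ∈ s, i + 2 ≤ j := fun i hi ↦ by
      have hij : i + 1 ≠ j := fun h ↦ hZ i (mem_insert_of_mem hi) (h ▸ mem_insert_self j s)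
      have := hlt i hi
      omega
    obtain ⟨L, e, hL, he, hsum⟩ :=
      ih (hZ.mono (subset_insert j s)) fun i hi ↦ hZ2 i (mem_insert_of_mem hi)
    obtain ⟨L', e', hL', he', hsum'⟩ :=
      hL.exists_step hx (q := j + 1) (Nat.lt_succ_of_le (he j (hZ2 j (mem_insert_self j s)) hgap))
    refine ⟨L', e', hL', fun j' _ hj' ↦ ?_, ?_⟩
    · have := hj' j (mem_insert_self j s); omega
    · rw [hsum', hsum, sum_insert fun h ↦ (hlt j h).false]
      ring

theorem exists_isSparse_sum_pow_eq (hx : x + x ^ 2 = 1) {Z : Finset ℕ} (hZ : IsSparse Z)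
    (hZ2 : ∀ j ∈ Z, 2 ≤ j) :
    ∃ N : Finset ℕ, IsSparse N ∧ (∀ k ∈ N, 2 ≤ k) ∧
      ∑ k ∈ N, x ^ k = x ^ 2 + ∑ j ∈ Z, (-x) ^ (j + 1) := by
  obtain ⟨L, e, hL, -, hsum⟩ := exists_evenCapped_sum_pow_eq hx hZ hZ2
  have he : e ∉ L := fun h ↦ by have := hL.bounds e h; omega
  refine ⟨L ∪ {e}, hL.sparse.union (.singleton e) (by simpa using fun k hk ↦ (hL.bounds k hk).2),
    ?_, by rw [sum_union (disjoint_singleton_right.2 he), sum_singleton, hsum]⟩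
  simp only [mem_union, mem_singleton]
  rintro k (hk | rfl)
  exacts [(hL.bounds k hk).1, hL.two_le]

end CommRing

theorem exists_isSparse_sum_inv_goldenRatio_pow_eq {Z : Finset ℕ} (hZ : IsSparse Z)
    (hZ2 : ∀ j ∈ Z, 2 ≤ j) :
    ∃ N : Finset ℕ, IsSparse N ∧ (∀ k ∈ N, 2 ≤ k) ∧
      ∑ k ∈ N, φ⁻¹ ^ k = ψ ^ 2 + ∑ j ∈ Z, ψ ^ (j + 1) := by
  have hx : φ⁻¹ + φ⁻¹ ^ 2 = 1 := by
    rw [inv_goldenRatio]; linear_combination goldenConj_sq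
  obtain ⟨N, hN, hN2, hsum⟩ := exists_isSparse_sum_pow_eq hx hZ hZ2
  refine ⟨N, hN, hN2, ?_⟩
  rwa [inv_goldenRatio, neg_neg, neg_sq, ← inv_goldenRatio] at hsum

theorem phi_eq_goldenRatio : phi = φ := rfl

theorem IsPhiRep.eq_sum_support {x : ℝ} {a : ℤ →₀ ℕ} (h : IsPhiRep x a) :
    x = ∑ i ∈ a.support, φ ^ i := by
  rw [h.2]
  refine sum_congr rfl fun i hi ↦ ?_
  rw [show a i = 1 by have := h.1 i; have := Finsupp.mem_support_iff.1 hi; omega]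
  simp [phi_eq_goldenRatio]

theorem isPhiRep_indicator (S : Finset ℤ) :
    IsPhiRep (∑ i ∈ S, φ ^ i) (Finsupp.indicator S fun _ _ ↦ 1) := by
  classical
  have hsupp : (Finsupp.indicator S fun _ _ ↦ 1).support = S := by
    ext i
    by_cases hi : i ∈ S <;> simp [Finsupp.indicator_apply, hi]
  refine ⟨fun i ↦ ?_, ?_⟩
  · rw [Finsupp.indicator_apply]; split_ifs <;> simp
  · rw [hsupp]
    exact sum_congr rfl fun i hi ↦ by simp [Finsupp.indicator_of_mem hi, phi_eq_goldenRatio]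

def dvlSupport (Z N : Finset ℕ) : Finset ℤ :=
  insert 0 (insert 1 (Z.image (fun j : ℕ ↦ (j : ℤ) + 1) ∪ N.image fun k : ℕ ↦ -(k : ℤ)))

theorem mem_dvlSupport {Z N : Finset ℕ} {i : ℤ} :
    i ∈ dvlSupport Z N ↔ i = 0 ∨ i = 1 ∨ (∃ j ∈ Z, (j : ℤ) + 1 = i) ∨ ∃ k ∈ N, -(k : ℤ) = i := by
  simp [dvlSupport]

theorem sum_zpow_dvlSupport {Z N : Finset ℕ} (hZ : 0 ∉ Z) (hN : 0 ∉ N) :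
    ∑ i ∈ dvlSupport Z N, φ ^ i = dvlValue Z N := by
  have h₀ :
      (0 : ℤ) ∉ insert 1 (Z.image (fun j : ℕ ↦ (j : ℤ) + 1) ∪ N.image fun k : ℕ ↦ -(k : ℤ)) := by
    simp only [mem_insert, mem_union, mem_image, not_or, not_exists, not_and]
    exact ⟨by norm_num, fun j _ ↦ by omega, fun k hk h ↦ hN (by rwa [show k = 0 by omega] at hk)⟩
  have h₁ : (1 : ℤ) ∉ Z.image (fun j : ℕ ↦ (j : ℤ) + 1) ∪ N.image fun k : ℕ ↦ -(k : ℤ) := by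
    simp only [mem_union, mem_image, not_or, not_exists, not_and]
    exact ⟨fun j hj h ↦ hZ (by rwa [show j = 0 by omega] at hj), fun k _ ↦ by omega⟩
  have hdisj : Disjoint (Z.image fun j : ℕ ↦ (j : ℤ) + 1) (N.image fun k : ℕ ↦ -(k : ℤ)) := by
    simp only [disjoint_left, mem_image, not_exists, not_and]
    rintro _ ⟨j, -, rfl⟩ k - h
    omega
  rw [dvlSupport, sum_insert h₀, sum_insert h₁, sum_union hdisj,
    sum_image fun _ _ _ _ h ↦ by simpa using h, sum_image fun _ _ _ _ h ↦ by simpa using h,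
    dvlValue]
  have hZ' (j : ℕ) : φ ^ ((j : ℤ) + 1) = φ ^ (j + 1) := by exact_mod_cast zpow_natCast φ (j + 1)
  have hN' (k : ℕ) : φ ^ (-(k : ℤ)) = φ⁻¹ ^ k := by rw [zpow_neg, zpow_natCast, inv_pow]
  simp only [zpow_zero, zpow_one, hZ', hN']
  ring

theorem IsPhiRep.exists_eq_dvlValue {x : ℝ} {a : ℤ →₀ ℕ} (ha : IsPhiRep x a) (ha1 : a 1 = 1)
    (ha0 : a 0 = 1) (ham1 : a (-1) = 0) (ha2 : a 2 = 0) :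
    ∃ Z N : Finset ℕ, (∀ j ∈ Z, 2 ≤ j) ∧ (∀ k ∈ N, 2 ≤ k) ∧ x = dvlValue Z N := by
  classical
  have hinjZ : Function.Injective fun j : ℕ ↦ (j : ℤ) + 1 := fun _ _ h ↦ by simpa using h
  have hinjN : Function.Injective fun k : ℕ ↦ -(k : ℤ) := fun _ _ h ↦ by simpa using h
  let Z := (a.support.preimage _ hinjZ.injOn).filter (2 ≤ ·)
  let N := (a.support.preimage _ hinjN.injOn).filter (2 ≤ ·)
  have hZ : ∀ j ∈ Z, 2 ≤ j := fun j hj ↦ (mem_filter.1 hj).2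
  have hN : ∀ k ∈ N, 2 ≤ k := fun k hk ↦ (mem_filter.1 hk).2
  have hS : a.support = dvlSupport Z N := by
    ext i
    simp only [mem_dvlSupport, Z, N, mem_filter, mem_preimage]
    constructor
    · intro hi
      rcases (by omega : i = 0 ∨ i = 1 ∨ 3 ≤ i ∨ i ≤ -2 ∨ i = 2 ∨ i = -1) with
        h | h | h | h | rfl | rfl
      · exact .inl h
      · exact .inr (.inl h)
      · obtain ⟨j, rfl⟩ : ∃ j : ℕ, i = j + 1 := ⟨(i - 1).toNat, by omega⟩
        exact .inr (.inr (.inl ⟨j, ⟨hi, by omega⟩, rfl⟩))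
      · obtain ⟨k, rfl⟩ : ∃ k : ℕ, i = -k := ⟨(-i).toNat, by omega⟩
        exact .inr (.inr (.inr ⟨k, ⟨hi, by omega⟩, rfl⟩))
      · simp [ha2] at hi
      · simp [ham1] at hi
    · rintro (rfl | rfl | ⟨j, ⟨hj, -⟩, rfl⟩ | ⟨k, ⟨hk, -⟩, rfl⟩)
      · simp [ha0]
      · simp [ha1]
      · exact hj
      · exact hk
  refine ⟨Z, N, hZ, hN, ?_⟩
  rw [ha.eq_sum_support, hS,
    sum_zpow_dvlSupport (fun h ↦ by have := hZ 0 h; omega) (fun h ↦ by have := hN 0 h; omega)]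

theorem eq_zero_of_mem_dvlSupport {Z N : Finset ℕ} (hZ : IsSparse Z) (hN : IsSparse N)
    (hZ2 : ∀ j ∈ Z, 2 ≤ j) (hN2 : ∀ k ∈ N, 2 ≤ k) {i : ℤ} (hi : i ∈ dvlSupport Z N)
    (hi1 : i + 1 ∈ dvlSupport Z N) : i = 0 := by
  rw [mem_dvlSupport] at hi hi1
  rcases hi with rfl | rfl | ⟨j, hj, rfl⟩ | ⟨k, hk, rfl⟩
  · rfl
  · rcases hi1 with h | h | ⟨j', hj', h⟩ | ⟨k', -, h⟩
    · omega
    · omega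
    · have := hZ2 j' hj'; omega
    · omega
  · rcases hi1 with h | h | ⟨j', hj', h⟩ | ⟨k', -, h⟩
    · omega
    · omega
    · obtain rfl : j' = j + 1 := by omega
      exact (hZ j hj hj').elim
    · omega
  · have := hN2 k hk
    rcases hi1 with h | h | ⟨j', -, h⟩ | ⟨k', hk', h⟩
    · omega
    · omega
    · omega
    · obtain rfl : k = k' + 1 := by omega
      exact (hN k' hk' hk).elim

theorem exists_isPhiRep_dvlValue {Z N : Finset ℕ} (hZ : IsSparse Z) (hN : IsSparse N)
    (hZ2 : ∀ j ∈ Z, 2 ≤ j) (hN2 : ∀ k ∈ N, 2 ≤ k) :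
    ∃ a : ℤ →₀ ℕ, IsPhiRep (dvlValue Z N) a ∧ a 1 = 1 ∧ a 0 = 1 ∧ a (-1) = 0 ∧
      ∀ i : ℤ, i ≠ 0 → a i * a (i + 1) = 0 := by
  classical
  refine ⟨Finsupp.indicator (dvlSupport Z N) fun _ _ ↦ 1, ?_, ?_, ?_, ?_, fun i hi ↦ ?_⟩
  · rw [← sum_zpow_dvlSupport (fun h ↦ by have := hZ2 0 h; omega)
      (fun h ↦ by have := hN2 0 h; omega)]
    exact isPhiRep_indicator _
  · simp [Finsupp.indicator_apply, mem_dvlSupport]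
  · simp [Finsupp.indicator_apply, mem_dvlSupport]
  · simpa [Finsupp.indicator_apply, mem_dvlSupport] using
      ⟨fun j _ ↦ by omega, fun h ↦ by have := hN2 1 h; omega⟩
  · simp only [Finsupp.indicator_apply]
    split_ifs with h h'
    · exact absurd (eq_zero_of_mem_dvlSupport hZ hN hZ2 hN2 h h') hi
    all_goals simp

theorem dvl_differs_iff_general
    (n : ℕ) :
    (∃ a : ℤ →₀ ℕ, IsPhiRep n a ∧ a 1 = 1 ∧ a 0 = 1 ∧ a (-1) = 0 ∧
        ∀ i : ℤ, i ≠ 0 → a i * a (i + 1) = 0) ↔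
      ∃ m : ℕ, 1 ≤ m ∧ (n : ℤ) = ⌊(phi + 2) * (m : ℝ)⌋ := by
  rw [phi_eq_goldenRatio]
  constructor
  · rintro ⟨a, ha, ha1, ha0, ham1, hadj⟩
    have ha2 : a 2 = 0 := by simpa [ha1] using hadj 1 one_ne_zero
    obtain ⟨Z, N, hZ, hN, hn⟩ := ha.exists_eq_dvlValue ha1 ha0 ham1 ha2
    refine ⟨1 + ∑ j ∈ Z, Nat.fib j, by omega, ?_⟩
    rw [floor_goldenRatio_add_two_mul hZ,
      eq_of_intCast_eq_dvlValue hZ hN (n := n) (by exact_mod_cast hn)]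
  · rintro ⟨m, hm, hnm⟩
    obtain ⟨Z, hZs, hZ, hZm⟩ := Nat.exists_isSparse_sum_fib (m - 1)
    obtain ⟨N, hNs, hN, hbal⟩ := exists_isSparse_sum_inv_goldenRatio_pow_eq hZs hZ
    rw [show m = 1 + ∑ j ∈ Z, Nat.fib j by omega, floor_goldenRatio_add_two_mul hZ] at hnm
    have hn : (n : ℝ) = dvlValue Z N := by
      rw [dvlValue_eq, hbal, sub_self, add_zero]
      exact_mod_cast hnm
    simpa only [hn] using exists_isPhiRep_dvlValue hZs hNs hZ hN

/-- For `n ≥ 1`, `n` admits a Dekking–Van Loon expansion that differs from its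
canonical φ-representation (i.e., a finite φ-representation with digits 1 at
positions 1 and 0, digit 0 at position -1, and no other adjacency) iff
`n = ⌊(φ+2)·m⌋` for some integer `m ≥ 1`. -/
theorem dvl_differs_iff
    (n : ℕ) (hn : 1 ≤ n) :
    (∃ a : ℤ →₀ ℕ, IsPhiRep n a ∧ a 1 = 1 ∧ a 0 = 1 ∧ a (-1) = 0 ∧
        ∀ i : ℤ, i ≠ 0 → a i * a (i + 1) = 0) ↔
      ∃ m : ℕ, 1 ≤ m ∧ (n : ℤ) = ⌊(phi + 2) * (m : ℝ)⌋ :=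
  dvl_differs_iff_general n
end

section
/- For every integer k ≥ 1, the set of Knott representations of F_k is finite and has exactly F_k elements; that is, κ(F_k) = F_k. -/
/-- `a` is a Knott representation of `n`: a finite φ-representation of `n` such that,
writing `j` for the minimal index with `a j = 1`, it is not the case that both
`a (j+1) = 1` and `a (j+2) = 0` (the digit string does not end in 011). -/
def IsKnottRep (n : ℕ) (a : ℤ →₀ ℕ) : Prop :=
  IsPhiRep n a ∧
    ∀ j : ℤ, (a j ≠ 0 ∧ ∀ i : ℤ, a i ≠ 0 → j ≤ i) → ¬(a (j + 1) = 1 ∧ a (j + 2) = 0)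

/-- The set of Knott representations of `n`. -/
def knottSet (n : ℕ) : Set (ℤ →₀ ℕ) := {a | IsKnottRep n a}

/-!
Identify a representation with the finite set `S ⊆ ℤ` of positions of its ones. Since
`φ ^ i = F(i-1) + F(i) φ` with integral Fibonacci numbers and `φ` is irrational,
`∑_{i ∈ S} φ ^ i = n` implies the conjugate identity `∑_{i ∈ S} ψ ^ i = n`. As `ψ ∈ (-1, 0)` and
`S` does not end in `011`, `∑_{i ∈ S} ψ ^ (i - min S) ≥ ψ ^ 2 = φ ^ (-2)`, hence
`φ ^ (-min S - 2) ≤ n`: the lowest position is bounded below, there are finitely many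
representations, and small cases can be enumerated.

For `k ≥ 3`, `F(k+2) = φ ^ k + φ ^ (-2) F(k)`, and size estimates force a representation of
`F(k+2)` to read `1`, `011` or `01011` from position `k` down. Removing these digits and shifting
the rest up by two is a bijection onto the representations of `F(k)` (in the last case, those
with no one at position `k-2`). Since no power of `φ` is an integer `≥ 2`, a representation of
such an integer has `max S - min S ≥ 2`; so the removed digits sit more than two places above the
lowest one, and the Knott condition is preserved. Writing `q(k)` for the number of
representations of `F(k)` with no one at `k-2`, this gives `κ(F(k+2)) = 2 κ(F(k)) + q(k)` and
`q(k+2) = κ(F(k)) + q(k)`, solved by `κ(F(k)) = F(k)` and `q(k) = F(k-1)`.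
-/

open Real goldenRatio

theorem zpow_eq_intFib_of_sq_eq {x : ℝ} (hx : x ^ 2 = x + 1) (i : ℤ) :
    x ^ i = Int.fib (i - 1) + Int.fib i * x := by
  have hx0 : x ≠ 0 := by rintro rfl; norm_num at hx
  induction i using Int.induction_on with
  | zero => simp
  | succ i ih =>
    have hfib := Int.fib_add_two ((i : ℤ) - 1)
    rw [show (i : ℤ) - 1 + 2 = i + 1 by ring, show (i : ℤ) - 1 + 1 = i by ring] at hfib
    rw [zpow_add_one₀ hx0, ih, add_sub_cancel_right, hfib]
    push_cast
    linear_combination (Int.fib i : ℝ) * hx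
  | pred i ih =>
    have hfib := Int.fib_add_two (-(i : ℤ) - 2)
    rw [show -(i : ℤ) - 2 + 2 = -i by ring, show -(i : ℤ) - 2 + 1 = -i - 1 by ring] at hfib
    apply mul_right_cancel₀ hx0
    rw [← zpow_add_one₀ hx0, sub_add_cancel, ih, show -(i : ℤ) - 1 - 1 = -i - 2 by ring, hfib]
    push_cast
    linear_combination (-(Int.fib (-(i : ℤ) - 1) : ℝ)) * hx

theorem int_add_int_mul_goldenRatio_eq_zero {a b : ℤ} (h : (a : ℝ) + b * φ = 0) :
    a = 0 ∧ b = 0 := by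
  obtain rfl : b = 0 := by
    by_contra hb
    exact ((goldenRatio_irrational.intCast_mul hb).intCast_add a).ne_int 0 (by simpa using h)
  simpa using h

theorem sum_zpow_goldenRatio_eq_intCast_iff (S : Finset ℤ) (n : ℤ) :
    ∑ i ∈ S, φ ^ i = n ↔ ∑ i ∈ S, Int.fib (i - 1) = n ∧ ∑ i ∈ S, Int.fib i = 0 := by
  have hsum : ∑ i ∈ S, φ ^ i - n =
      ((∑ i ∈ S, Int.fib (i - 1) - n : ℤ) : ℝ) + ((∑ i ∈ S, Int.fib i : ℤ) : ℝ) * φ := by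
    simp only [zpow_eq_intFib_of_sq_eq goldenRatio_sq, Finset.sum_add_distrib, ← Finset.sum_mul]
    push_cast
    ring
  rw [← sub_eq_zero, hsum]
  constructor
  · intro h
    obtain ⟨h1, h2⟩ := int_add_int_mul_goldenRatio_eq_zero h
    exact ⟨by omega, h2⟩
  · rintro ⟨h1, h2⟩
    simp [h1, h2]

theorem sum_zpow_goldenConj_eq_of_sum_zpow_goldenRatio_eq {S : Finset ℤ} {n : ℤ}
    (h : ∑ i ∈ S, φ ^ i = n) : ∑ i ∈ S, ψ ^ i = n := by
  obtain ⟨h1, h2⟩ := (sum_zpow_goldenRatio_eq_intCast_iff S n).mp h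
  simp only [zpow_eq_intFib_of_sq_eq goldenConj_sq, Finset.sum_add_distrib, ← Finset.sum_mul]
  exact_mod_cast (by simp [h1, h2] :
    ((∑ i ∈ S, Int.fib (i - 1) : ℤ) : ℝ) + ((∑ i ∈ S, Int.fib i : ℤ) : ℝ) * ψ = n)

theorem eq_one_of_goldenRatio_zpow_eq_natCast {e : ℤ} {m : ℕ} (h : φ ^ e = m) : m = 1 := by
  have hconj : ψ ^ e = m := by
    simpa using sum_zpow_goldenConj_eq_of_sum_zpow_goldenRatio_eq (S := {e}) (n := m)
      (by simpa using h)
  have hsq : (m : ℝ) ^ 2 = |(-1 : ℝ) ^ e| := by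
    rw [← goldenRatio_mul_goldenConj, mul_zpow, h, hconj, abs_mul, sq, Nat.abs_cast]
  rw [abs_zpow, abs_neg, abs_one, one_zpow] at hsq
  exact_mod_cast (pow_eq_one_iff_of_nonneg (Nat.cast_nonneg _) two_ne_zero).mp hsq

theorem goldenRatio_zpow_add_two (i : ℤ) : φ ^ (i + 2) = φ ^ (i + 1) + φ ^ i := by
  rw [zpow_add₀ goldenRatio_ne_zero, zpow_add_one₀ goldenRatio_ne_zero, zpow_two, ← sq,
    goldenRatio_sq]
  ring

theorem sum_zpow_sub_eq_zpow_mul_sum {x : ℝ} (hx : x ≠ 0) (S : Finset ℤ) (m d : ℤ) :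
    ∑ i ∈ S, x ^ (i - m) = x ^ d * ∑ i ∈ S, x ^ (i - (m + d)) := by
  rw [Finset.mul_sum]
  refine Finset.sum_congr rfl fun i _ => ?_
  rw [← zpow_add₀ hx]
  ring_nf

theorem sum_zpow_goldenRatio_lt {S : Finset ℤ} {M : ℤ} (hS : ∀ i ∈ S, i ≤ M) :
    ∑ i ∈ S, φ ^ i < φ ^ (M + 2) := by
  induction S using Finset.induction_on_max generalizing M with
  | empty => simpa using zpow_pos goldenRatio_pos _
  | insert a S ha ih =>
    have hS' : ∑ i ∈ S, φ ^ i < φ ^ (a + 1) := by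
      have := ih (M := a - 1) fun i hi => Int.le_sub_one_of_lt (ha i hi)
      rwa [show a - 1 + 2 = a + 1 by ring] at this
    rw [Finset.sum_insert fun h => lt_irrefl a (ha a h)]
    calc φ ^ a + ∑ i ∈ S, φ ^ i < φ ^ (a + 2) := by rw [goldenRatio_zpow_add_two]; linarith
      _ ≤ φ ^ (M + 2) := zpow_le_zpow_right₀ one_lt_goldenRatio.le
          (by linarith [hS a (Finset.mem_insert_self a S)])

theorem le_of_mem_of_sum_zpow_goldenRatio_lt {S : Finset ℤ} {M i : ℤ}
    (hS : ∑ i ∈ S, φ ^ i < φ ^ (M + 1)) (hi : i ∈ S) : i ≤ M := by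
  have := (Finset.single_le_sum (fun j _ => (zpow_pos goldenRatio_pos j).le) hi).trans_lt hS
  have := (zpow_lt_zpow_iff_right₀ one_lt_goldenRatio).mp this
  omega

theorem mem_of_forall_le_of_zpow_add_sum_lt {S P : Finset ℤ} {u : ℤ} (hP : P ⊆ S)
    (hS : ∀ i ∈ S \ P, i ≤ u) (h : φ ^ (u + 1) + ∑ i ∈ P, φ ^ i < ∑ i ∈ S, φ ^ i) : u ∈ S := by
  by_contra hu
  have := sum_zpow_goldenRatio_lt (M := u - 1) fun i hi =>
    Int.le_sub_one_iff.mpr (lt_of_le_of_ne (hS i hi) fun h => hu (h ▸ (Finset.mem_sdiff.1 hi).1))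
  rw [show u - 1 + 2 = u + 1 by ring] at this
  linarith [Finset.sum_sdiff hP (f := (φ ^ ·))]

theorem sum_zpow_goldenConj_sub_mem_Icc {S : Finset ℤ} {m : ℤ} (hS : ∀ i ∈ S, m ≤ i) :
    ∑ i ∈ S, ψ ^ (i - m) ∈ Set.Icc (-1) φ := by
  obtain ⟨M, hM⟩ := S.bddAbove
  suffices h : ∀ N : ℕ, ∀ m : ℤ, ∀ S : Finset ℤ, (∀ i ∈ S, m ≤ i ∧ i < m + N) →
      ∑ i ∈ S, ψ ^ (i - m) ∈ Set.Icc (-1) φ from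
    h (M - m + 1).toNat m S fun i hi => ⟨hS i hi, by have := hM hi; omega⟩
  intro N
  induction N with
  | zero =>
    intro m S hS
    obtain rfl : S = ∅ := Finset.eq_empty_of_forall_notMem fun i hi => by
      have := hS i hi; omega
    simpa using goldenRatio_pos.le
  | succ N ih =>
    -- The interval `[-1, φ]` is stable under `x ↦ d + ψ x` for `d ∈ [0, 1]`, as `ψ φ = -1`
    -- and `1 - ψ = φ`.
    intro m S hS
    obtain ⟨hX1, hX2⟩ := ih (m + 1) (S.erase m) fun i hi => by
      have := hS i (Finset.mem_of_mem_erase hi)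
      have := Finset.ne_of_mem_erase hi
      omega
    obtain ⟨d, hd0, hd1, hsum⟩ : ∃ d : ℝ, 0 ≤ d ∧ d ≤ 1 ∧
        ∑ i ∈ S, ψ ^ (i - m) = d + ∑ i ∈ S.erase m, ψ ^ (i - m) := by
      by_cases hm : m ∈ S
      · exact ⟨1, zero_le_one, le_rfl, by
          simpa using (Finset.add_sum_erase S (fun i => ψ ^ (i - m)) hm).symm⟩
      · exact ⟨0, le_rfl, zero_le_one, by simp [Finset.erase_eq_of_notMem hm]⟩
    rw [hsum, sum_zpow_sub_eq_zpow_mul_sum goldenConj_ne_zero _ m 1, zpow_one]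
    have := goldenRatio_mul_goldenConj
    have := one_sub_goldenRatio
    constructor
    · nlinarith [mul_nonneg_of_nonpos_of_nonpos goldenConj_neg.le (sub_nonpos.2 hX2)]
    · nlinarith [mul_nonpos_of_nonpos_of_nonneg goldenConj_neg.le (neg_le_iff_add_nonneg.1 hX1)]

def EndsIn011 (S : Finset ℤ) : Prop :=
  ∃ j ∈ S, (∀ i ∈ S, j ≤ i) ∧ j + 1 ∈ S ∧ j + 2 ∉ S

instance : DecidablePred EndsIn011 := fun S => by unfold EndsIn011; infer_instance

/-- Knott representations of `n`, each identified with its set of positions of the digit 1. -/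
def knottFinsets (n : ℕ) : Set (Finset ℤ) :=
  {S | ∑ i ∈ S, φ ^ i = n ∧ ¬EndsIn011 S}

theorem goldenConj_sq_le_sum_zpow_sub {S : Finset ℤ} {j : ℤ} (hS : ¬EndsIn011 S) (hj : j ∈ S)
    (hmin : ∀ i ∈ S, j ≤ i) : ψ ^ 2 ≤ ∑ i ∈ S, ψ ^ (i - j) := by
  have hpeel : ∀ (P : Finset ℤ) (d : ℤ), P ⊆ S → (∀ i ∈ S \ P, j + d ≤ i) →
      ∃ Y ∈ Set.Icc (-1) φ, ∑ i ∈ S, ψ ^ (i - j) = ∑ i ∈ P, ψ ^ (i - j) + ψ ^ d * Y := by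
    intro P d hP hd
    refine ⟨_, sum_zpow_goldenConj_sub_mem_Icc hd, ?_⟩
    rw [← sum_zpow_sub_eq_zpow_mul_sum goldenConj_ne_zero, add_comm, Finset.sum_sdiff hP]
  have hφ : 3 / 2 < φ := by nlinarith [goldenRatio_sq, one_lt_goldenRatio]
  have hψ := one_sub_goldenRatio
  by_cases h1 : j + 1 ∈ S
  · have h2 : j + 2 ∈ S := by_contra fun h2 => hS ⟨j, hj, hmin, h1, h2⟩
    obtain ⟨Y, ⟨-, hY⟩, hsum⟩ := hpeel {j, j + 1, j + 2} 3
      (by simp [Finset.insert_subset_iff, hj, h1, h2]) fun i hi => by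
        simp only [Finset.mem_sdiff, Finset.mem_insert, Finset.mem_singleton] at hi
        have := hmin i hi.1
        omega
    rw [hsum, Finset.sum_insert (by simp), Finset.sum_pair (by simp)]
    simp only [sub_self, add_sub_cancel_left, zpow_ofNat, pow_zero, pow_one]
    have hcube : ψ ^ 3 * φ = -ψ ^ 2 := by
      rw [pow_succ, mul_assoc, goldenConj_mul_goldenRatio, mul_neg_one]
    nlinarith [goldenConj_sq, mul_nonneg_of_nonpos_of_nonpos
      (Odd.pow_nonpos (n := 3) (by decide) goldenConj_neg.le) (sub_nonpos.2 hY)]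
  · obtain ⟨Y, ⟨hY, -⟩, hsum⟩ := hpeel {j} 2 (by simpa using hj) fun i hi => by
      simp only [Finset.mem_sdiff, Finset.mem_singleton] at hi
      have := hmin i hi.1
      have : i ≠ j + 1 := fun h => h1 (h ▸ hi.1)
      omega
    rw [hsum, Finset.sum_singleton, sub_self, zpow_zero, zpow_ofNat]
    nlinarith [goldenConj_sq, mul_nonneg (sq_nonneg ψ) (neg_le_iff_add_nonneg.1 hY)]

theorem goldenRatio_zpow_neg_sub_two_le {n : ℕ} {S : Finset ℤ} (hS : S ∈ knottFinsets n)
    {j : ℤ} (hj : j ∈ S) (hmin : ∀ i ∈ S, j ≤ i) : φ ^ (-j - 2) ≤ n := by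
  have hconj : (n : ℝ) = ψ ^ j * ∑ i ∈ S, ψ ^ (i - j) := by
    have := sum_zpow_sub_eq_zpow_mul_sum goldenConj_ne_zero S 0 j
    simp only [sub_zero, zero_add] at this
    rw [← this]
    exact_mod_cast (sum_zpow_goldenConj_eq_of_sum_zpow_goldenRatio_eq (n := n)
      (by exact_mod_cast hS.1)).symm
  have habs : |ψ| = φ⁻¹ := by rw [abs_of_neg goldenConj_neg, inv_goldenRatio]
  calc φ ^ (-j - 2) = |ψ| ^ j * ψ ^ 2 := by
        rw [← sq_abs, habs, ← zpow_natCast, inv_zpow', inv_zpow',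
          ← zpow_add₀ goldenRatio_ne_zero]
        congr 1
    _ ≤ |ψ| ^ j * ∑ i ∈ S, ψ ^ (i - j) := by
        gcongr
        exact goldenConj_sq_le_sum_zpow_sub hS.2 hj hmin
    _ ≤ |(n : ℝ)| := by
        rw [hconj, abs_mul, abs_zpow]
        exact mul_le_mul_of_nonneg_left (le_abs_self _) (by positivity)
    _ = n := Nat.abs_cast n

theorem subset_Icc_of_mem_knottFinsets {n : ℕ} {t : ℤ} {S : Finset ℤ} (hS : S ∈ knottFinsets n)
    (ht : (n : ℝ) < φ ^ t) : S ⊆ Finset.Icc (-t - 1) (t - 1) := by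
  intro i hi
  have hup := le_of_mem_of_sum_zpow_goldenRatio_lt (M := t - 1) (by rwa [hS.1, sub_add_cancel]) hi
  have hne : S.Nonempty := ⟨i, hi⟩
  have hlow := goldenRatio_zpow_neg_sub_two_le hS (S.min'_mem hne) fun i hi => S.min'_le i hi
  have := (zpow_lt_zpow_iff_right₀ one_lt_goldenRatio).mp (hlow.trans_lt ht)
  have := S.min'_le i hi
  rw [Finset.mem_Icc]
  omega

theorem knottFinsets_finite (n : ℕ) : (knottFinsets n).Finite := by
  obtain ⟨t, ht⟩ := pow_unbounded_of_one_lt (n : ℝ) one_lt_goldenRatio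
  refine (Finset.Icc (-(t : ℤ) - 1) (t - 1)).powerset.finite_toSet.subset fun S hS => ?_
  exact Finset.mem_coe.2 (Finset.mem_powerset.2
    (subset_Icc_of_mem_knottFinsets hS (by rwa [zpow_natCast])))

/-- A decidable description of the representations, so that small cases can be counted by
`decide`. -/
theorem ncard_sep_knottFinsets {n : ℕ} {t : ℤ} (ht : (n : ℝ) < φ ^ t) (p : Finset ℤ → Prop)
    [DecidablePred p] :
    {S ∈ knottFinsets n | p S}.ncard = ((Finset.Icc (-t - 1) (t - 1)).powerset.filter fun S =>
      (∑ i ∈ S, Int.fib (i - 1) = n ∧ ∑ i ∈ S, Int.fib i = 0) ∧ ¬EndsIn011 S ∧ p S).card := by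
  rw [← Set.ncard_coe_finset]
  congr 1
  ext S
  simp only [Set.mem_ofPred_eq, Finset.coe_filter, Finset.mem_powerset, knottFinsets,
    ← sum_zpow_goldenRatio_eq_intCast_iff, Int.cast_natCast]
  exact ⟨fun h => ⟨subset_Icc_of_mem_knottFinsets h.1 ht, h.1.1, h.1.2, h.2⟩,
    fun h => ⟨⟨h.2.1, h.2.2.1⟩, h.2.2.2⟩⟩

def shift (c : ℤ) (S : Finset ℤ) : Finset ℤ := S.map (Equiv.addRight c).toEmbedding

@[simp] theorem mem_shift {c i : ℤ} {S : Finset ℤ} : i ∈ shift c S ↔ i - c ∈ S := by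
  simp [shift, Finset.mem_map_equiv, sub_eq_add_neg]

theorem sum_shift {M : Type*} [AddCommMonoid M] (f : ℤ → M) (c : ℤ) (S : Finset ℤ) :
    ∑ i ∈ shift c S, f i = ∑ i ∈ S, f (i + c) :=
  Finset.sum_map _ _ _

theorem shift_shift (c d : ℤ) (S : Finset ℤ) : shift c (shift d S) = shift (d + c) S := by
  ext i; simp [sub_sub, add_comm]

theorem shift_neg_shift (c : ℤ) (S : Finset ℤ) : shift (-c) (shift c S) = S := by
  ext i; simp

theorem endsIn011_shift_iff {c : ℤ} {S : Finset ℤ} : EndsIn011 (shift c S) ↔ EndsIn011 S := by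
  suffices h : ∀ c S, EndsIn011 S → EndsIn011 (shift c S) from
    ⟨fun hS => shift_neg_shift c S ▸ h (-c) _ hS, h c S⟩
  rintro c S ⟨j, hj, hmin, h1, h2⟩
  refine ⟨j + c, by simpa using hj, fun i hi => ?_, by rwa [mem_shift, add_sub_right_comm,
    add_sub_cancel_right], by rwa [mem_shift, add_sub_right_comm, add_sub_cancel_right]⟩
  have := hmin _ (mem_shift.1 hi)
  omega

theorem endsIn011_union_iff {C S : Finset ℤ} {s : ℤ} (hs : s ∈ S) (hC : ∀ c ∈ C, s + 2 < c) :
    EndsIn011 (C ∪ S) ↔ EndsIn011 S := by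
  have hCs : ∀ i, i ≤ s + 2 → i ∉ C := fun i hi hiC => by have := hC i hiC; omega
  constructor
  · rintro ⟨j, hj, hmin, h1, h2⟩
    have hjs : j ≤ s := hmin s (Finset.mem_union_right C hs)
    refine ⟨j, ?_, fun i hi => hmin i (Finset.mem_union_right C hi), ?_,
      fun h => h2 (Finset.mem_union_right C h)⟩
    · exact (Finset.mem_union.1 hj).resolve_left (hCs j (by omega))
    · exact (Finset.mem_union.1 h1).resolve_left (hCs _ (by omega))
  · rintro ⟨j, hj, hmin, h1, h2⟩
    have hjs : j ≤ s := hmin s hs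
    refine ⟨j, Finset.mem_union_right C hj, fun i hi => ?_, Finset.mem_union_right C h1, ?_⟩
    · rcases Finset.mem_union.1 hi with hi | hi
      · have := hC i hi; omega
      · exact hmin i hi
    · rw [Finset.mem_union, not_or]
      exact ⟨hCs _ (by omega), h2⟩

theorem exists_mem_add_two_le {T : Finset ℤ} {m : ℕ} (hT : ∑ i ∈ T, φ ^ i = m) (hm : 2 ≤ m)
    {M : ℤ} (hM : ∀ i ∈ T, i ≤ M) : ∃ i ∈ T, i + 2 ≤ M := by
  by_contra! h
  have hT2 : ∀ i, i ∈ T ↔ (i = M - 1 ∧ M - 1 ∈ T) ∨ (i = M ∧ M ∈ T) := fun i => by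
    constructor
    · intro hi; have := h i hi; have := hM i hi; grind
    · rintro (⟨rfl, hi⟩ | ⟨rfl, hi⟩) <;> exact hi
  have hpow : ∃ e : ℤ, φ ^ e = m := by
    by_cases hM1 : M - 1 ∈ T <;> by_cases hM0 : M ∈ T <;> simp only [hM1, hM0, and_true,
      and_false, or_false, false_or] at hT2
    · refine ⟨M + 1, ?_⟩
      rw [← hT, show T = {M - 1, M} by ext i; simp [hT2], Finset.sum_pair (by omega),
        show M + 1 = M - 1 + 2 by ring, goldenRatio_zpow_add_two, sub_add_cancel, add_comm]
    · exact ⟨M - 1, by rw [← hT, show T = {M - 1} by ext i; simp [hT2], Finset.sum_singleton]⟩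
    · exact ⟨M, by rw [← hT, show T = {M} by ext i; simp [hT2], Finset.sum_singleton]⟩
    · obtain rfl : T = ∅ := by ext i; simp [hT2]
      have : (m : ℝ) = 0 := by rw [← hT, Finset.sum_empty]
      norm_cast at this
      omega
  obtain ⟨e, he⟩ := hpow
  have := eq_one_of_goldenRatio_zpow_eq_natCast he
  omega

section Gluing

variable {C T : Finset ℤ} {b : ℤ}

theorem sum_union_shift (hCb : ∀ c ∈ C, b < c) (hTb : ∀ i ∈ T, i ≤ b + 2) :
    ∑ i ∈ C ∪ shift (-2) T, φ ^ i = ∑ i ∈ C, φ ^ i + φ ^ (-2 : ℤ) * ∑ i ∈ T, φ ^ i := by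
  have hdisj : Disjoint C (shift (-2) T) := Finset.disjoint_left.2 fun c hc hc' => by
    have := hTb _ (mem_shift.1 hc'); have := hCb c hc; omega
  rw [Finset.sum_union hdisj, sum_shift, Finset.mul_sum]
  simp only [← zpow_add₀ goldenRatio_ne_zero, add_comm]

theorem endsIn011_union_shift_iff {m : ℕ} (hm : 2 ≤ m) (hCb : ∀ c ∈ C, b < c)
    (hT : ∑ i ∈ T, φ ^ i = m) (hTb : ∀ i ∈ T, i ≤ b + 2) :
    EndsIn011 (C ∪ shift (-2) T) ↔ EndsIn011 T := by
  obtain ⟨s, hs, hsb⟩ := exists_mem_add_two_le hT hm hTb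
  rw [endsIn011_union_iff (s := s - 2) (by simpa using hs) fun c hc => by
    have := hCb c hc; omega, endsIn011_shift_iff]

theorem injOn_union_shift (hCb : ∀ c ∈ C, b < c) :
    Set.InjOn (C ∪ shift (-2) ·) {T | ∀ i ∈ T, i ≤ b + 2} := by
  have key : ∀ T : Finset ℤ, (∀ i ∈ T, i ≤ b + 2) → ∀ i,
      i ∈ T ↔ i - 2 ∈ C ∪ shift (-2) T ∧ i - 2 ≤ b := fun T hT i => by
    have := hCb (i - 2)
    simp only [Finset.mem_union, mem_shift, sub_neg_eq_add, sub_add_cancel]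
    constructor
    · intro hi; have := hT i hi; exact ⟨Or.inr hi, by omega⟩
    · rintro ⟨hi | hi, hib⟩
      · have := hCb _ hi; omega
      · exact hi
  intro T₁ h₁ T₂ h₂ h
  ext i
  simp only at h
  rw [key T₁ h₁, key T₂ h₂, h]

variable {n m : ℕ}

theorem sep_knottFinsets_filter_eq_image (hm : 2 ≤ m) (hCb : ∀ c ∈ C, b < c)
    (hsum : ∑ i ∈ C, φ ^ i + φ ^ (-2 : ℤ) * m = n) :
    {S ∈ knottFinsets n | S.filter (b < ·) = C} =
      (C ∪ shift (-2) ·) '' {T ∈ knottFinsets m | ∀ i ∈ T, i ≤ b + 2} := by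
  ext S
  constructor
  · rintro ⟨⟨hSn, hS⟩, hSC⟩
    set T := shift 2 (S.filter (· ≤ b))
    have hTb : ∀ i ∈ T, i ≤ b + 2 := fun i hi => by
      simp only [T, mem_shift, Finset.mem_filter] at hi; omega
    have hST : S = C ∪ shift (-2) T := by
      ext i; simp only [T, ← hSC, shift_shift, Finset.mem_union, Finset.mem_filter, mem_shift]
      grind
    have hTm : ∑ i ∈ T, φ ^ i = m := by
      rw [hST, sum_union_shift hCb hTb, ← hsum, add_right_inj] at hSn
      exact mul_left_cancel₀ (zpow_ne_zero _ goldenRatio_ne_zero) hSn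
    refine ⟨T, ⟨⟨hTm, ?_⟩, hTb⟩, hST.symm⟩
    rwa [← endsIn011_union_shift_iff hm hCb hTm hTb, ← hST]
  · rintro ⟨T, ⟨⟨hTm, hT⟩, hTb⟩, rfl⟩
    refine ⟨⟨?_, ?_⟩, ?_⟩
    · rw [sum_union_shift hCb hTb, hTm, hsum]
    · rwa [endsIn011_union_shift_iff hm hCb hTm hTb]
    · ext i
      have := hCb i
      have := hTb (i + 2)
      simp only [Finset.mem_filter, Finset.mem_union, mem_shift, sub_neg_eq_add]
      grind

theorem ncard_sep_knottFinsets_filter (hm : 2 ≤ m) (hCb : ∀ c ∈ C, b < c)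
    (hsum : ∑ i ∈ C, φ ^ i + φ ^ (-2 : ℤ) * m = n) :
    {S ∈ knottFinsets n | S.filter (b < ·) = C}.ncard =
      {T ∈ knottFinsets m | ∀ i ∈ T, i ≤ b + 2}.ncard := by
  rw [sep_knottFinsets_filter_eq_image hm hCb hsum,
    ((injOn_union_shift hCb).mono fun T hT => hT.2).ncard_image]

end Gluing

theorem fib_add_two_eq_goldenRatio_zpow (k : ℕ) :
    (Nat.fib (k + 2) : ℝ) = φ ^ (k : ℤ) + φ ^ (-2 : ℤ) * Nat.fib k := by
  have h1 := goldenRatio_mul_fib_succ_add_fib k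
  have h2 := goldenRatio_mul_fib_succ_add_fib (k + 1)
  rw [zpow_neg, zpow_natCast, zpow_ofNat, ← sub_eq_iff_eq_add', eq_comm,
    inv_mul_eq_iff_eq_mul₀ (pow_ne_zero 2 goldenRatio_ne_zero)]
  linear_combination h1 - φ * h2 - φ ^ (k + 1) * goldenRatio_sq

theorem fib_add_two_lt_goldenRatio_pow (k : ℕ) : (Nat.fib (k + 2) : ℝ) < φ ^ (k + 1) := by
  have h := fib_succ_sub_goldenConj_mul_fib (k + 1)
  have : 0 < (Nat.fib (k + 1) : ℝ) := by exact_mod_cast Nat.fib_pos.2 k.succ_pos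
  nlinarith [goldenConj_neg]

theorem goldenRatio_zpow_lt_fib_add_two {k : ℕ} (hk : 1 ≤ k) :
    φ ^ (k : ℤ) < Nat.fib (k + 2) := by
  have : 0 < (Nat.fib k : ℝ) := by exact_mod_cast Nat.fib_pos.2 hk
  rw [fib_add_two_eq_goldenRatio_zpow]
  have := zpow_pos goldenRatio_pos (-2)
  nlinarith

theorem goldenRatio_zpow_sub_one_add_lt_fib_add_two {k : ℕ} (hk : 3 ≤ k) :
    φ ^ ((k : ℤ) - 1) + 2 * φ ^ ((k : ℤ) - 3) < Nat.fib (k + 2) := by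
  obtain ⟨j, rfl⟩ : ∃ j, k = j + 2 := ⟨k - 2, by omega⟩
  have hlow := mul_lt_mul_of_pos_left (goldenRatio_zpow_lt_fib_add_two (k := j) (by omega))
    (zpow_pos goldenRatio_pos (-2))
  rw [← zpow_add₀ goldenRatio_ne_zero, neg_add_eq_sub] at hlow
  have hr1 := goldenRatio_zpow_add_two j
  have hr2 := goldenRatio_zpow_add_two (j - 2)
  have hr3 : φ ^ ((j : ℤ) - 1) = φ * φ ^ ((j : ℤ) - 2) := by
    rw [← zpow_one_add₀ goldenRatio_ne_zero]; congr 1; ring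
  rw [sub_add_cancel, show (j : ℤ) - 2 + 1 = j - 1 by ring] at hr2
  rw [fib_add_two_eq_goldenRatio_zpow]
  push_cast
  rw [show (j : ℤ) + 2 - 1 = j + 1 by ring, show (j : ℤ) + 2 - 3 = j - 1 by ring]
  nlinarith [goldenRatio_lt_two, zpow_pos goldenRatio_pos ((j : ℤ) - 2)]

theorem le_of_mem_knottFinsets_fib {k : ℕ} (hk : 2 ≤ k) {S : Finset ℤ}
    (hS : S ∈ knottFinsets (Nat.fib k)) {i : ℤ} (hi : i ∈ S) : i ≤ (k : ℤ) - 2 := by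
  obtain ⟨j, rfl⟩ : ∃ j, k = j + 2 := ⟨k - 2, by omega⟩
  refine le_of_mem_of_sum_zpow_goldenRatio_lt ?_ hi
  rw [hS.1]
  convert fib_add_two_lt_goldenRatio_pow j using 1
  rw [← zpow_natCast]; push_cast; ring_nf

theorem filter_eq_of_mem_knottFinsets_fib {k : ℕ} (hk : 3 ≤ k) {S : Finset ℤ}
    (hS : S ∈ knottFinsets (Nat.fib (k + 2))) (hSk : ∀ i ∈ S, i ≤ (k : ℤ) - 1) :
    S.filter ((k : ℤ) - 3 < ·) = {(k : ℤ) - 2, (k : ℤ) - 1} ∨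
      S.filter ((k : ℤ) - 5 < ·) = {(k : ℤ) - 4, (k : ℤ) - 3, (k : ℤ) - 1} := by
  have hF3 := goldenRatio_zpow_lt_fib_add_two (k := k) (by omega)
  have hF4 := goldenRatio_zpow_sub_one_add_lt_fib_add_two hk
  have hrec := goldenRatio_zpow_add_two ((k : ℤ) - 2)
  rw [sub_add_cancel, show (k : ℤ) - 2 + 1 = k - 1 by ring] at hrec
  have h1 : (k : ℤ) - 1 ∈ S :=
    mem_of_forall_le_of_zpow_add_sum_lt (Finset.empty_subset S) (by simpa using hSk)
      (by rwa [sub_add_cancel, Finset.sum_empty, add_zero, hS.1])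
  by_cases h2 : (k : ℤ) - 2 ∈ S
  · left
    ext i
    have := hSk i
    simp only [Finset.mem_filter, Finset.mem_insert, Finset.mem_singleton]
    grind
  · right
    have h3 : (k : ℤ) - 3 ∈ S := by
      refine mem_of_forall_le_of_zpow_add_sum_lt (P := {(k : ℤ) - 1}) (by simpa using h1)
        (fun i hi => ?_) ?_
      · simp only [Finset.mem_sdiff, Finset.mem_singleton] at hi
        have := hSk i hi.1
        have : i ≠ (k : ℤ) - 2 := fun h => h2 (h ▸ hi.1)
        omega
      · rw [Finset.sum_singleton, hS.1, show (k : ℤ) - 3 + 1 = k - 2 by ring]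
        linarith
    have h4 : (k : ℤ) - 4 ∈ S := by
      refine mem_of_forall_le_of_zpow_add_sum_lt (P := {(k : ℤ) - 3, (k : ℤ) - 1})
        (by simp [Finset.insert_subset_iff, h1, h3]) (fun i hi => ?_) ?_
      · simp only [Finset.mem_sdiff, Finset.mem_insert, Finset.mem_singleton] at hi
        have := hSk i hi.1
        have : i ≠ (k : ℤ) - 2 := fun h => h2 (h ▸ hi.1)
        omega
      · rw [Finset.sum_pair (by omega), hS.1, show (k : ℤ) - 4 + 1 = k - 3 by ring]
        linarith
    ext i
    have := hSk i
    simp only [Finset.mem_filter, Finset.mem_insert, Finset.mem_singleton]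
    grind

section Counting

variable {k : ℕ}

theorem sep_knottFinsets_fib_le_eq_self (hk : 2 ≤ k) {M : ℤ} (hM : (k : ℤ) - 2 ≤ M) :
    {T ∈ knottFinsets (Nat.fib k) | ∀ i ∈ T, i ≤ M} = knottFinsets (Nat.fib k) :=
  Set.sep_eq_self_iff_mem_true.2 fun _ hT _ hi => (le_of_mem_knottFinsets_fib hk hT hi).trans hM

theorem ncard_sep_knottFinsets_fib_add_two_le (hk : 3 ≤ k) :
    {S ∈ knottFinsets (Nat.fib (k + 2)) | ∀ i ∈ S, i ≤ (k : ℤ) - 1}.ncard =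
      (knottFinsets (Nat.fib k)).ncard +
        {T ∈ knottFinsets (Nat.fib k) | ∀ i ∈ T, i ≤ (k : ℤ) - 3}.ncard := by
  have hm : 2 ≤ Nat.fib k := (Nat.fib_mono hk).trans' (by decide)
  have hF := fib_add_two_eq_goldenRatio_zpow k
  have hrec := goldenRatio_zpow_add_two ((k : ℤ) - 2)
  rw [sub_add_cancel, show (k : ℤ) - 2 + 1 = k - 1 by ring] at hrec
  have hrec' := goldenRatio_zpow_add_two ((k : ℤ) - 4)
  rw [show (k : ℤ) - 4 + 2 = k - 2 by ring, show (k : ℤ) - 4 + 1 = k - 3 by ring] at hrec'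
  set B := {S ∈ knottFinsets (Nat.fib (k + 2)) |
    S.filter ((k : ℤ) - 3 < ·) = {(k : ℤ) - 2, (k : ℤ) - 1}}
  set C := {S ∈ knottFinsets (Nat.fib (k + 2)) |
    S.filter ((k : ℤ) - 5 < ·) = {(k : ℤ) - 4, (k : ℤ) - 3, (k : ℤ) - 1}}
  have hsplit : {S ∈ knottFinsets (Nat.fib (k + 2)) | ∀ i ∈ S, i ≤ (k : ℤ) - 1} = B ∪ C := by
    ext S
    constructor
    · rintro ⟨hS, hSk⟩
      exact (filter_eq_of_mem_knottFinsets_fib hk hS hSk).imp (⟨hS, ·⟩) (⟨hS, ·⟩)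
    · rintro (⟨hS, hSC⟩ | ⟨hS, hSC⟩)
      all_goals
        refine ⟨hS, fun i hi => ?_⟩
        have hik := le_of_mem_knottFinsets_fib (k := k + 2) (by omega) hS hi
        have hiC := Finset.ext_iff.1 hSC i
        simp only [Finset.mem_filter, Finset.mem_insert, Finset.mem_singleton] at hiC
        push_cast at hik
        grind
  have hdisj : Disjoint B C := Set.disjoint_left.2 fun S ⟨_, hSB⟩ ⟨_, hSC⟩ => by
    have hB := Finset.ext_iff.1 hSB ((k : ℤ) - 2)
    have hC := Finset.ext_iff.1 hSC ((k : ℤ) - 2)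
    simp only [Finset.mem_filter, Finset.mem_insert, Finset.mem_singleton] at hB hC
    grind
  have hfin : ∀ p : Finset ℤ → Prop, {S ∈ knottFinsets (Nat.fib (k + 2)) | p S}.Finite :=
    fun p => (knottFinsets_finite _).subset (Set.sep_subset _ _)
  rw [hsplit, Set.ncard_union_eq hdisj (hfin _) (hfin _),
    ncard_sep_knottFinsets_filter hm (by simp) (by rw [Finset.sum_pair (by omega), hF]; linarith),
    ncard_sep_knottFinsets_filter hm (by simp) (by
      rw [Finset.sum_insert (by simp), Finset.sum_pair (by omega), hF]; linarith),
    sep_knottFinsets_fib_le_eq_self (by omega) (by omega), show (k : ℤ) - 5 + 2 = k - 3 by ring]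

theorem ncard_knottFinsets_fib_add_two (hk : 3 ≤ k) :
    (knottFinsets (Nat.fib (k + 2))).ncard = (knottFinsets (Nat.fib k)).ncard +
      {S ∈ knottFinsets (Nat.fib (k + 2)) | ∀ i ∈ S, i ≤ (k : ℤ) - 1}.ncard := by
  have hm : 2 ≤ Nat.fib k := (Nat.fib_mono hk).trans' (by decide)
  have hF := fib_add_two_eq_goldenRatio_zpow k
  set A := {S ∈ knottFinsets (Nat.fib (k + 2)) | S.filter ((k : ℤ) - 1 < ·) = {(k : ℤ)}}
  set Q := {S ∈ knottFinsets (Nat.fib (k + 2)) | ∀ i ∈ S, i ≤ (k : ℤ) - 1}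
  have hsplit : knottFinsets (Nat.fib (k + 2)) = A ∪ Q := by
    ext S
    refine ⟨fun hS => ?_, fun h => h.elim (·.1) (·.1)⟩
    have hSk : ∀ i ∈ S, i ≤ k := fun i hi => by
      have := le_of_mem_knottFinsets_fib (k := k + 2) (by omega) hS hi; push_cast at this; omega
    by_cases hkS : (k : ℤ) ∈ S
    · refine Or.inl ⟨hS, Finset.ext fun i => ?_⟩
      have := hSk i
      simp only [Finset.mem_filter, Finset.mem_singleton]
      grind
    · exact Or.inr ⟨hS, fun i hi => by
        have := hSk i hi; have : i ≠ k := fun h => hkS (h ▸ hi); omega⟩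
  have hdisj : Disjoint A Q := Set.disjoint_left.2 fun S ⟨_, hSA⟩ ⟨_, hSQ⟩ => by
    have := Finset.ext_iff.1 hSA k
    simp only [Finset.mem_filter, Finset.mem_singleton] at this
    have := hSQ k (this.2 trivial).1
    omega
  have hfin : ∀ p : Finset ℤ → Prop, {S ∈ knottFinsets (Nat.fib (k + 2)) | p S}.Finite :=
    fun p => (knottFinsets_finite _).subset (Set.sep_subset _ _)
  calc (knottFinsets (Nat.fib (k + 2))).ncard = (A ∪ Q).ncard := congrArg Set.ncard hsplit
    _ = _ := by
      rw [Set.ncard_union_eq hdisj (hfin _) (hfin _),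
        ncard_sep_knottFinsets_filter hm (by simp) (by rw [Finset.sum_singleton, hF]),
        sep_knottFinsets_fib_le_eq_self (by omega) (by omega)]

end Counting

theorem ncard_knottFinsets_one : (knottFinsets 1).ncard = 1 := by
  rw [← Set.sep_true (s := knottFinsets 1),
    ncard_sep_knottFinsets (t := 1) (by simpa using one_lt_goldenRatio)]
  decide

theorem ncard_knottFinsets_fib_add_three (j : ℕ) :
    (knottFinsets (Nat.fib (j + 3))).ncard = Nat.fib (j + 3) ∧
      {S ∈ knottFinsets (Nat.fib (j + 3)) | ∀ i ∈ S, i ≤ (j : ℤ)}.ncard = Nat.fib (j + 2) := by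
  induction j using Nat.twoStepInduction with
  | zero =>
    have ht : ((2 : ℕ) : ℝ) < φ ^ (2 : ℤ) := by
      rw [zpow_ofNat, goldenRatio_sq]; push_cast; linarith [one_lt_goldenRatio]
    constructor
    · rw [← Set.sep_true (s := knottFinsets _), show Nat.fib 3 = 2 from rfl,
        ncard_sep_knottFinsets ht]
      decide
    · rw [show Nat.fib 3 = 2 from rfl, ncard_sep_knottFinsets ht]
      decide
  | one =>
    have ht : ((3 : ℕ) : ℝ) < φ ^ (3 : ℤ) := by
      rw [zpow_ofNat, pow_succ, goldenRatio_sq]; push_cast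
      nlinarith [one_lt_goldenRatio, goldenRatio_sq]
    constructor
    · rw [← Set.sep_true (s := knottFinsets _), show Nat.fib 4 = 3 from rfl,
        ncard_sep_knottFinsets ht]
      decide
    · rw [show Nat.fib 4 = 3 from rfl, ncard_sep_knottFinsets ht]
      decide
  | more j ih _ =>
    have hQ := ncard_sep_knottFinsets_fib_add_two_le (k := j + 3) (by omega)
    have hK := ncard_knottFinsets_fib_add_two (k := j + 3) (by omega)
    have e1 : ((j + 3 : ℕ) : ℤ) - 1 = ((j + 2 : ℕ) : ℤ) := by push_cast; ring
    have e3 : ((j + 3 : ℕ) : ℤ) - 3 = j := by push_cast; ring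
    rw [e1, e3, ih.1, ih.2] at hQ
    rw [e1, hQ, ih.1] at hK
    have hfib : Nat.fib (j + 4) = Nat.fib (j + 2) + Nat.fib (j + 3) := Nat.fib_add_two
    have hfib' : Nat.fib (j + 5) = Nat.fib (j + 3) + Nat.fib (j + 4) := Nat.fib_add_two
    rw [show j + 3 + 2 = j + 5 from rfl] at hQ hK
    constructor
    · change (knottFinsets (Nat.fib (j + 5))).ncard = Nat.fib (j + 5)
      omega
    · change {S ∈ knottFinsets (Nat.fib (j + 5)) | ∀ i ∈ S, i ≤ ((j + 2 : ℕ) : ℤ)}.ncard =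
        Nat.fib (j + 4)
      omega

theorem isKnottRep_iff {n : ℕ} {a : ℤ →₀ ℕ} :
    IsKnottRep n a ↔ (∀ i, a i ≤ 1) ∧ a.support ∈ knottFinsets n := by
  by_cases hd : ∀ i, a i ≤ 1
  · have hone : ∀ i, a i = 1 ↔ i ∈ a.support := fun i => by
      rw [Finsupp.mem_support_iff]; have := hd i; omega
    have hsum : ∑ i ∈ a.support, (a i : ℝ) * phi ^ i = ∑ i ∈ a.support, φ ^ i :=
      Finset.sum_congr rfl fun i hi => by rw [(hone i).2 hi, Nat.cast_one, one_mul]; rfl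
    simp_all [knottFinsets, IsKnottRep, IsPhiRep, EndsIn011, eq_comm]
  · simp [IsKnottRep, IsPhiRep, hd]

theorem injOn_support : Set.InjOn Finsupp.support {a : ℤ →₀ ℕ | ∀ i, a i ≤ 1} := by
  intro a ha b hb h
  ext i
  have := Finset.ext_iff.1 h i
  have := ha i
  have := hb i
  simp only [Finsupp.mem_support_iff] at *
  omega

theorem image_support_knottSet (n : ℕ) : Finsupp.support '' knottSet n = knottFinsets n := by
  ext S
  refine ⟨fun ⟨a, ha, hS⟩ => hS ▸ (isKnottRep_iff.1 ha).2, fun hS => ⟨Multiset.toFinsupp S.val,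
    isKnottRep_iff.2 ⟨fun i => Multiset.nodup_iff_count_le_one.1 S.nodup i, ?_⟩, ?_⟩⟩ <;>
  simp [Multiset.toFinsupp_support, hS]

/-- For `k ≥ 1`, the set of Knott representations of `F_k` is finite and
`κ(F_k) = F_k`. -/
theorem knott_count_fib (k : ℕ) (hk : 1 ≤ k) :
    (knottSet (Nat.fib k)).Finite ∧ (knottSet (Nat.fib k)).ncard = Nat.fib k := by
  have hcount : (knottFinsets (Nat.fib k)).ncard = Nat.fib k := by
    rcases k with _ | _ | _ | j
    · omega
    · exact ncard_knottFinsets_one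
    · exact ncard_knottFinsets_one
    · exact (ncard_knottFinsets_fib_add_three j).1
  have hinj : Set.InjOn Finsupp.support (knottSet (Nat.fib k)) :=
    injOn_support.mono fun a ha => (isKnottRep_iff.1 ha).1
  rw [← image_support_knottSet] at hcount
  exact ⟨.of_finite_image (image_support_knottSet _ ▸ knottFinsets_finite _) hinj,
    hinj.ncard_image ▸ hcount⟩
end

section
/- For every integer n ≥ 0, the sets of natural expansions of F_{2n+1} and of F_{2n+2} are finite and ν(F_{2n+1}) = ν(F_{2n+2}) = F_{2n+1}. -/
/-- Given the family `d` of canonical φ-representations, `naturalSet d m` is the set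
of natural expansions of `m`: finite φ-representations `a` of `m` whose minimal index
with a nonzero digit coincides with that of the canonical φ-representation `d m`. -/
def naturalSet (d : ℕ → ℤ →₀ ℕ) (m : ℕ) : Set (ℤ →₀ ℕ) :=
  {a | IsPhiRep m a ∧
    ∃ j : ℤ, (a j ≠ 0 ∧ ∀ i : ℤ, a i ≠ 0 → j ≤ i) ∧
      (d m j ≠ 0 ∧ ∀ i : ℤ, d m i ≠ 0 → j ≤ i)}

/-!
Evaluate a digit set `T ⊆ ℕ` at the pair `(φ, ψ)`, so that the second coordinate is the Galois
conjugate of the value. As `ψ = -1/φ`, that conjugate always lies in `(-1, φ)`, and this bound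
controls the lowest digits. It shows that the canonical expansions of `F_{2n+1}` and `F_{2n+2}`
start at position `-2n`; after a shift by `2n`, natural expansions become digit sets containing `0`
of value `y_n = F_{2n+1} (φ, ψ)^{2n}`, resp. `(φ, ψ) y_n - (φ, ψ) + 1`.
Now `y_{n+1} = (φ, ψ)^4 y_n - (φ, ψ)`, and the conjugate bound forces such a digit set of value
`y_{n+1}`, read from position `0` upwards, to begin with `1001`, `1110` or `1111`, followed by a
digit set of value `y_n` with its digit at `0` removed (first two cases), or by one beginning with
`11` with its digit at `1` removed. So the counts `(ν, ω)` of those beginning with `1`, resp. `11`,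
satisfy `ν' = 2ν + ω` and `ω' = ν + ω`, the recursion of `(F_{2n+1}, F_{2n})`. The digit sets of
value `(φ, ψ) y_n - (φ, ψ) + 1` arise from those of value `y_n` by moving every digit but the first
up by one.
-/

open Finset Real
open scoped goldenRatio

namespace PhiExpansion

lemma goldenConj_lt_neg_three_fifths : ψ < -3 / 5 := by
  have : (11 / 5 : ℝ) < √5 := by
    rw [Real.lt_sqrt (by norm_num)]; norm_num
  rw [goldenConj]; linarith

noncomputable def gold : ℝ × ℝ := (φ, ψ)

lemma gold_sq : gold ^ 2 = gold + 1 := Prod.ext goldenRatio_sq goldenConj_sq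

lemma isUnit_gold : IsUnit gold :=
  isUnit_iff_exists_inv.2 ⟨gold - 1, by linear_combination gold_sq⟩

/-- A digit set `T ⊆ ℕ` stands for the finite `0/1` string with ones exactly at `T`. -/
noncomputable def value (T : Finset ℕ) : ℝ × ℝ := ∑ t ∈ T, gold ^ t

@[simp] lemma value_fst (T : Finset ℕ) : (value T).1 = ∑ t ∈ T, φ ^ t := by
  simp [value, gold, Prod.fst_sum]

@[simp] lemma value_snd (T : Finset ℕ) : (value T).2 = ∑ t ∈ T, ψ ^ t := by
  simp [value, gold, Prod.snd_sum]

lemma value_insert {j : ℕ} {R : Finset ℕ} (hj : j ∉ R) :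
    value (insert j R) = gold ^ j + value R :=
  sum_insert hj

def concat (P : Finset ℕ) (k : ℕ) (R : Finset ℕ) : Finset ℕ :=
  P ∪ R.map (addRightEmbedding k)

noncomputable def tail (k : ℕ) (T : Finset ℕ) : Finset ℕ :=
  T.preimage (· + k) (add_left_injective k).injOn

@[simp] lemma mem_tail {k t : ℕ} {T : Finset ℕ} : t ∈ tail k T ↔ t + k ∈ T :=
  mem_preimage

lemma mem_concat {P R : Finset ℕ} {k t : ℕ} :
    t ∈ concat P k R ↔ t ∈ P ∨ ∃ s ∈ R, s + k = t := by
  simp [concat]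

lemma concat_inter_range_tail (T : Finset ℕ) (k : ℕ) :
    concat (T ∩ range k) k (tail k T) = T := by
  ext t
  simp only [mem_concat, mem_inter, mem_range, mem_tail]
  constructor
  · rintro (⟨h, -⟩ | ⟨s, hs, rfl⟩) <;> assumption
  · intro h
    by_cases htk : t < k
    · exact Or.inl ⟨h, htk⟩
    · exact Or.inr ⟨t - k, by rwa [Nat.sub_add_cancel (not_lt.1 htk)], by omega⟩

lemma concat_inter_range {P : Finset ℕ} {k : ℕ} (hP : P ⊆ range k) (R : Finset ℕ) :
    concat P k R ∩ range k = P := by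
  ext t
  simp only [mem_inter, mem_concat, mem_range]
  constructor
  · rintro ⟨h | ⟨s, -, rfl⟩, ht⟩
    · exact h
    · omega
  · intro h
    exact ⟨Or.inl h, mem_range.1 (hP h)⟩

lemma tail_concat {P : Finset ℕ} {k : ℕ} (hP : P ⊆ range k) (R : Finset ℕ) :
    tail k (concat P k R) = R := by
  ext t
  simp only [mem_tail, mem_concat]
  constructor
  · rintro (h | ⟨s, hs, hst⟩)
    · exact absurd (mem_range.1 (hP h)) (by omega)
    · rwa [← Nat.add_right_cancel hst]
  · exact fun h => Or.inr ⟨t, h, rfl⟩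

lemma value_concat {P : Finset ℕ} {k : ℕ} (hP : P ⊆ range k) (R : Finset ℕ) :
    value (concat P k R) = value P + gold ^ k * value R := by
  have hdisj : Disjoint P (R.map (addRightEmbedding k)) := by
    rw [disjoint_left]
    intro t ht ht'
    obtain ⟨s, -, rfl⟩ := mem_map.1 ht'
    have := mem_range.1 (hP ht)
    simp at this
  simp only [value, concat, sum_union hdisj, sum_map, addRightEmbedding_apply, pow_add,
    sum_mul, mul_comm (gold ^ k)]

lemma value_eq_add (T : Finset ℕ) (k : ℕ) :
    value T = value (T ∩ range k) + gold ^ k * value (tail k T) := by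
  conv_lhs => rw [← concat_inter_range_tail T k]
  exact value_concat inter_subset_right _

lemma value_snd_eq_add (T : Finset ℕ) (k : ℕ) :
    (value T).2 = (value (T ∩ range k)).2 + ψ ^ k * (value (tail k T)).2 := by
  simpa [gold] using congrArg Prod.snd (value_eq_add T k)

lemma mem_of_inter_range_eq {T P : Finset ℕ} {k t : ℕ} (hT : T ∩ range k = P) (ht : t < k) :
    t ∈ T ↔ t ∈ P := by
  rw [← hT]; simp [ht]

/-! ### The conjugate bound -/

lemma value_snd_mem_Ioo (T : Finset ℕ) : -1 < (value T).2 ∧ (value T).2 < φ := by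
  suffices ∀ N, ∀ T ⊆ range N, -1 < (value T).2 ∧ (value T).2 < φ from
    this _ T T.subset_range_sup_succ
  intro N
  induction N with
  | zero => intro T hT; simp at hT; simp [hT]; positivity
  | succ N ih =>
    intro T hT
    obtain ⟨hlo, hhi⟩ := ih (tail 1 T) fun t ht => by
      simpa using mem_range.1 (hT (mem_tail.1 ht))
    have hψr₁ := mul_lt_mul_of_neg_left hhi goldenConj_neg
    have hψr₂ := mul_lt_mul_of_neg_left hlo goldenConj_neg
    rw [goldenConj_mul_goldenRatio] at hψr₁
    have hhead : (value (T ∩ range 1)).2 = 0 ∨ (value (T ∩ range 1)).2 = 1 := by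
      rcases subset_singleton_iff.1 (show T ∩ range 1 ⊆ {0} from inter_subset_right) with h | h <;>
        rw [h] <;> simp
    rw [value_snd_eq_add T 1, pow_one]
    rcases hhead with h | h <;> rw [h] <;> constructor <;> linarith [goldenRatio_add_goldenConj]

section ConjugateBounds

variable {T : Finset ℕ}

lemma value_snd_pos (h0 : 0 ∈ T) : 0 < (value T).2 := by
  have hhead : T ∩ range 1 = {0} := by ext t; simp; grind
  obtain ⟨-, hr⟩ := value_snd_mem_Ioo (tail 1 T)
  rw [value_snd_eq_add T 1, hhead]
  simp only [value_snd, sum_singleton, pow_zero, pow_one] at hr ⊢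
  nlinarith [goldenConj_neg, goldenConj_mul_goldenRatio]

lemma value_snd_lt_neg_goldenConj (h0 : 0 ∉ T) : (value T).2 < -ψ := by
  have hhead : T ∩ range 1 = ∅ := by ext t; simp; grind
  obtain ⟨hr, -⟩ := value_snd_mem_Ioo (tail 1 T)
  rw [value_snd_eq_add T 1, hhead]
  simp only [value_snd, sum_empty, pow_one] at hr ⊢
  nlinarith [goldenConj_neg]

lemma value_snd_lt_one (h0 : 0 ∈ T) (h1 : 1 ∈ T) : (value T).2 < 1 := by
  have hhead : T ∩ range 2 = {0, 1} := by ext t; simp; grind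
  obtain ⟨-, hr⟩ := value_snd_mem_Ioo (tail 2 T)
  rw [value_snd_eq_add T 2, hhead]
  simp only [value_snd, sum_insert, sum_singleton, mem_singleton, zero_ne_one, not_false_eq_true,
    pow_zero, pow_one] at hr ⊢
  have : ψ ^ 2 * φ = -ψ := by linear_combination ψ * goldenConj_mul_goldenRatio
  nlinarith [mul_lt_mul_of_pos_left hr (sq_pos_of_neg goldenConj_neg)]

lemma value_snd_mem_Ioo_of_one_notMem (h0 : 0 ∈ T) (h1 : 1 ∉ T) :
    -ψ < (value T).2 ∧ (value T).2 < φ := by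
  have hhead : T ∩ range 2 = {0} := by ext t; simp; grind
  obtain ⟨hr₁, hr₂⟩ := value_snd_mem_Ioo (tail 2 T)
  rw [value_snd_eq_add T 2, hhead]
  simp only [value_snd, sum_singleton, pow_zero] at hr₁ hr₂ ⊢
  have hψ := sq_pos_of_neg goldenConj_neg
  constructor <;> nlinarith [mul_lt_mul_of_pos_left hr₁ hψ, mul_lt_mul_of_pos_left hr₂ hψ,
    goldenConj_mul_goldenRatio, goldenConj_sq, goldenRatio_add_goldenConj]

lemma inter_range_four_eq (h0 : 0 ∈ T) (hlo : -ψ ≤ (value T).2)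
    (hhi : (value T).2 ≤ 2 * ψ + 2) :
    T ∩ range 4 = {0, 3} ∨ T ∩ range 4 = {0, 1, 2} ∨ T ∩ range 4 = {0, 1, 2, 3} := by
  have hP : T ∩ range 4 ∈ (range 4).powerset.filter (0 ∈ ·) := by simp [h0]
  rw [show (range 4).powerset.filter (0 ∈ ·) = {{0}, {0, 1}, {0, 2}, {0, 3}, {0, 1, 2}, {0, 1, 3},
    {0, 2, 3}, {0, 1, 2, 3}} by decide] at hP
  -- The digits from position 4 on contribute `ψ ^ 4 * r` with `r ∈ (-1, φ)`, an interval of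
  -- length `ψ ^ 2`; only three of the eight blocks leave room for it.
  obtain ⟨hr₁, hr₂⟩ := value_snd_mem_Ioo (tail 4 T)
  have hψ4 : ψ ^ 4 = 3 * ψ + 2 := by linear_combination (ψ ^ 2 + ψ + 2) * goldenConj_sq
  have hψ3 : ψ ^ 3 = 2 * ψ + 1 := by linear_combination (ψ + 1) * goldenConj_sq
  have hψ4pos : 0 < ψ ^ 4 := (by decide : Even 4).pow_pos goldenConj_ne_zero
  have hs₁ : -(3 * ψ + 2) < ψ ^ 4 * (value (tail 4 T)).2 := by
    nlinarith [mul_lt_mul_of_pos_left hr₁ hψ4pos]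
  have hs₂ : ψ ^ 4 * (value (tail 4 T)).2 < -(2 * ψ + 1) := by
    nlinarith [mul_lt_mul_of_pos_left hr₂ hψ4pos, goldenConj_mul_goldenRatio]
  have hsplit := value_snd_eq_add T 4
  set r := (value (tail 4 T)).2
  set v := (value T).2
  have := goldenConj_lt_neg_three_fifths
  simp only [mem_insert, mem_singleton] at hP
  rcases hP with h | h | h | h | h | h | h | h
  all_goals first
    | exact Or.inl h | exact Or.inr (Or.inl h) | exact Or.inr (Or.inr h)
    | (exfalso; rw [h] at hsplit; simp [value_snd, goldenConj_sq] at hsplit; linarith)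

end ConjugateBounds

/-! ### Counting digit sets of a given value -/

def reps (x : ℝ × ℝ) : Set (Finset ℕ) := {T | value T = x}

def zeroReps (x : ℝ × ℝ) : Set (Finset ℕ) := {T | 0 ∈ T ∧ value T = x}

def zeroOneReps (x : ℝ × ℝ) : Set (Finset ℕ) := {T | 0 ∈ T ∧ 1 ∈ T ∧ value T = x}

def cylinder (k : ℕ) (P : Finset ℕ) (x : ℝ × ℝ) : Set (Finset ℕ) :=
  {T | T ∩ range k = P ∧ value T = x}

lemma reps_finite (x : ℝ × ℝ) : (reps x).Finite := by
  obtain ⟨N, hN⟩ := pow_unbounded_of_one_lt x.1 one_lt_goldenRatio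
  refine (range N).powerset.finite_toSet.subset fun T (hT : value T = x) => ?_
  rw [mem_coe, mem_powerset]
  intro t ht
  have : φ ^ t ≤ x.1 := by
    rw [← hT, value_fst]
    exact single_le_sum (fun i _ => (pow_pos goldenRatio_pos i).le) ht
  exact mem_range.2 ((pow_lt_pow_iff_right₀ one_lt_goldenRatio).1 (this.trans_lt hN))

lemma zeroReps_finite (x : ℝ × ℝ) : (zeroReps x).Finite :=
  (reps_finite x).subset fun _ hT => hT.2

lemma cylinder_finite (k : ℕ) (P : Finset ℕ) (x : ℝ × ℝ) : (cylinder k P x).Finite :=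
  (reps_finite x).subset fun _ hT => hT.2

lemma disjoint_cylinder {k : ℕ} {P Q : Finset ℕ} (h : P ≠ Q) (x : ℝ × ℝ) :
    Disjoint (cylinder k P x) (cylinder k Q x) :=
  Set.disjoint_left.2 fun _ hP hQ => h (hP.1.symm.trans hQ.1)

lemma reps_zero : reps 0 = {∅} := by
  ext T
  simp only [reps, Set.mem_ofPred_eq, Set.mem_singleton_iff]
  constructor
  · intro hT
    by_contra hne
    have := sum_pos (fun t _ => pow_pos goldenRatio_pos t) (nonempty_iff_ne_empty.2 hne)
    rw [← value_fst, hT] at this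
    exact this.false
  · rintro rfl; rfl

lemma reps_one_sub_gold : reps (1 - gold) = ∅ := by
  refine Set.eq_empty_of_forall_notMem fun T (hT : value T = 1 - gold) => ?_
  have := sum_nonneg (fun t (_ : t ∈ T) => (pow_pos goldenRatio_pos t).le)
  rw [← value_fst, hT] at this
  simp [gold] at this
  linarith [one_lt_goldenRatio]

lemma ncard_cylinder {P : Finset ℕ} {k : ℕ} (hP : P ⊆ range k) (u : ℝ × ℝ) :
    (cylinder k P (value P + gold ^ k * u)).ncard = (reps u).ncard := by
  have himage : cylinder k P (value P + gold ^ k * u) = concat P k '' reps u := by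
    ext T
    constructor
    · rintro ⟨hT, hval⟩
      refine ⟨tail k T, ?_, by rw [← hT, concat_inter_range_tail]⟩
      rw [value_eq_add T k, hT, add_right_inj] at hval
      exact (isUnit_gold.pow k).mul_left_cancel hval
    · rintro ⟨R, hR : value R = u, rfl⟩
      exact ⟨concat_inter_range hP R, by rw [value_concat hP, hR]⟩
  rw [himage, Set.ncard_image_of_injective _ fun R R' h => by
    simpa [tail_concat hP] using congrArg (tail k) h]

lemma ncard_image_insert {j : ℕ} {S : Set (Finset ℕ)} (hS : ∀ R ∈ S, j ∉ R) :
    (insert j '' S).ncard = S.ncard :=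
  Set.InjOn.ncard_image fun R hR R' hR' h => by
    rw [← erase_insert (hS R hR), h, erase_insert (hS R' hR')]

section Counting

variable {x : ℝ × ℝ}

lemma ncard_zeroReps (hx : x.2 ≤ 1) : (zeroReps x).ncard = (reps (x - 1)).ncard := by
  have h0 : ∀ R ∈ reps (x - 1), 0 ∉ R := fun R (hR : value R = x - 1) h0 => by
    have := value_snd_pos h0
    rw [hR] at this
    simp at this
    linarith
  have himage : zeroReps x = insert 0 '' reps (x - 1) := by
    ext T
    constructor
    · rintro ⟨h0, hT⟩
      refine ⟨T.erase 0, ?_, insert_erase h0⟩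
      change value (T.erase 0) = x - 1
      rw [← hT, ← insert_erase h0, value_insert (notMem_erase 0 T),
        erase_insert (notMem_erase 0 T)]
      simp
    · rintro ⟨R, hR, rfl⟩
      exact ⟨mem_insert_self 0 R, by rw [value_insert (h0 R hR), hR.out]; simp⟩
  rw [himage, ncard_image_insert h0]

lemma ncard_zeroOneReps (hx : 1 + ψ ≤ x.2) :
    (zeroOneReps x).ncard = (reps (x - gold)).ncard := by
  have hR : ∀ R ∈ reps (x - gold), 0 ∈ R ∧ 1 ∉ R := fun R (hR : value R = x - gold) => by
    have hv : (value R).2 = x.2 - ψ := by rw [hR]; rfl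
    have h0 : 0 ∈ R := by
      by_contra h0
      linarith [value_snd_lt_neg_goldenConj h0, neg_one_lt_goldenConj]
    exact ⟨h0, fun h1 => by linarith [value_snd_lt_one h0 h1]⟩
  have himage : zeroOneReps x = insert 1 '' reps (x - gold) := by
    ext T
    constructor
    · rintro ⟨h0, h1, hT⟩
      refine ⟨T.erase 1, ?_, insert_erase h1⟩
      change value (T.erase 1) = x - gold
      rw [← hT, ← insert_erase h1, value_insert (notMem_erase 1 T),
        erase_insert (notMem_erase 1 T)]
      simp
    · rintro ⟨R, hRx, rfl⟩
      exact ⟨mem_insert_of_mem (hR R hRx).1, mem_insert_self 1 R,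
        by rw [value_insert (hR R hRx).2, hRx.out]; simp⟩
  rw [himage, ncard_image_insert fun R h => (hR R h).2]

lemma zeroReps_eq_union (hlo : -ψ ≤ x.2) (hhi : x.2 ≤ 2 * ψ + 2) :
    zeroReps x = cylinder 4 {0, 3} x ∪ cylinder 4 {0, 1, 2} x ∪ cylinder 4 {0, 1, 2, 3} x := by
  ext T
  constructor
  · rintro ⟨h0, hT⟩
    rcases inter_range_four_eq h0 (hT ▸ hlo) (hT ▸ hhi) with h | h | h
    · exact Or.inl (Or.inl ⟨h, hT⟩)
    · exact Or.inl (Or.inr ⟨h, hT⟩)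
    · exact Or.inr ⟨h, hT⟩
  · rintro ((⟨h, hT⟩ | ⟨h, hT⟩) | ⟨h, hT⟩) <;>
      exact ⟨(mem_of_inter_range_eq h (by norm_num)).2 (by simp), hT⟩

lemma zeroOneReps_eq_union (hlo : -ψ ≤ x.2) (hhi : x.2 ≤ 2 * ψ + 2) :
    zeroOneReps x = cylinder 4 {0, 1, 2} x ∪ cylinder 4 {0, 1, 2, 3} x := by
  ext T
  constructor
  · rintro ⟨h0, h1, hT⟩
    have hT' : T ∈ zeroReps x := ⟨h0, hT⟩
    rw [zeroReps_eq_union hlo hhi] at hT'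
    rcases hT' with (h | h) | h
    · exact absurd ((mem_of_inter_range_eq h.1 (by norm_num)).1 h1) (by simp)
    · exact Or.inl h
    · exact Or.inr h
  · rintro (⟨h, hT⟩ | ⟨h, hT⟩) <;>
      exact ⟨(mem_of_inter_range_eq h (by norm_num)).2 (by simp),
        (mem_of_inter_range_eq h (by norm_num)).2 (by simp), hT⟩

lemma snd_gold_pow_four_mul_sub_gold_mem (hlo : -ψ ≤ x.2) (hhi : x.2 ≤ 1) :
    -ψ ≤ (gold ^ 4 * x - gold).2 ∧ (gold ^ 4 * x - gold).2 ≤ 2 * ψ + 2 := by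
  have hψ4 : ψ ^ 4 = 3 * ψ + 2 := by linear_combination (ψ ^ 2 + ψ + 2) * goldenConj_sq
  have hψ4pos : 0 < ψ ^ 4 := (by decide : Even 4).pow_pos goldenConj_ne_zero
  simp only [gold, Prod.snd_sub, Prod.snd_mul, Prod.pow_snd]
  constructor <;> nlinarith [goldenConj_neg]

lemma ncard_zeroReps_gold_pow_four_mul_sub_gold (hlo : -ψ ≤ x.2) (hhi : x.2 ≤ 1) :
    (zeroReps (gold ^ 4 * x - gold)).ncard = 2 * (zeroReps x).ncard + (zeroOneReps x).ncard ∧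
    (zeroOneReps (gold ^ 4 * x - gold)).ncard = (zeroReps x).ncard + (zeroOneReps x).ncard := by
  set y := gold ^ 4 * x - gold
  obtain ⟨hylo, hyhi⟩ := snd_gold_pow_four_mul_sub_gold_mem hlo hhi
  have ha : (cylinder 4 {0, 3} y).ncard = (zeroReps x).ncard := by
    have e : y = value {0, 3} + gold ^ 4 * (x - 1) := by
      simp [y, value]; linear_combination (gold ^ 2 + 1) * gold_sq
    rw [e, ncard_cylinder (by decide), ncard_zeroReps hhi]
  have hb : (cylinder 4 {0, 1, 2} y).ncard = (zeroReps x).ncard := by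
    have e : y = value {0, 1, 2} + gold ^ 4 * (x - 1) := by
      simp [y, value]; linear_combination (gold ^ 2 + gold + 1) * gold_sq
    rw [e, ncard_cylinder (by decide), ncard_zeroReps hhi]
  have hc : (cylinder 4 {0, 1, 2, 3} y).ncard = (zeroOneReps x).ncard := by
    have e : y = value {0, 1, 2, 3} + gold ^ 4 * (x - gold) := by
      simp [y, value]; linear_combination (gold ^ 3 + gold ^ 2 + gold + 1) * gold_sq
    rw [e, ncard_cylinder (by decide),
      ncard_zeroOneReps (by linarith [goldenConj_lt_neg_three_fifths])]
  rw [zeroReps_eq_union hylo hyhi, zeroOneReps_eq_union hylo hyhi,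
    Set.ncard_union_eq (disjoint_cylinder (by decide) y) (cylinder_finite ..) (cylinder_finite ..),
    Set.ncard_union_eq (Set.disjoint_union_left.2 ⟨disjoint_cylinder (by decide) y,
      disjoint_cylinder (by decide) y⟩) ((cylinder_finite ..).union (cylinder_finite ..))
      (cylinder_finite ..),
    Set.ncard_union_eq (disjoint_cylinder (by decide) y) (cylinder_finite ..) (cylinder_finite ..),
    ha, hb, hc]
  omega

lemma ncard_zeroReps_gold_mul_sub_add_one (hx : x.2 ≤ 1) :
    (zeroReps (gold * x - gold + 1)).ncard = (zeroReps x).ncard := by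
  have hcyl : zeroReps (gold * x - gold + 1) =
      cylinder 1 {0} (value {0} + gold ^ 1 * (x - 1)) := by
    ext T
    simp only [zeroReps, cylinder, Set.mem_ofPred_eq]
    rw [show value {0} + gold ^ 1 * (x - 1) = gold * x - gold + 1 by simp [value]; ring]
    constructor
    · rintro ⟨h0, hT⟩
      exact ⟨by ext t; simp; grind, hT⟩
    · rintro ⟨h, hT⟩
      exact ⟨(mem_of_inter_range_eq h one_pos).2 (mem_singleton_self 0), hT⟩
  rw [hcyl, ncard_cylinder (by decide), ncard_zeroReps hx]

end Counting

/-! ### The Fibonacci values -/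

lemma fib_succ_eq_mul_add_one_sub_pow {R : Type*} [CommRing R] {x : R} (hx : x ^ 2 = x + 1)
    (m : ℕ) : (Nat.fib (m + 1) : R) = x * Nat.fib m + (1 - x) ^ m := by
  induction m with
  | zero => simp
  | succ m ih =>
    rw [Nat.fib_add_two, Nat.cast_add, ih]
    linear_combination (-(Nat.fib m : R)) * hx

lemma one_sub_gold_pow_mul_gold_pow (k : ℕ) : (1 - gold) ^ k * gold ^ k = (-1) ^ k := by
  rw [← mul_pow]; congr 1; linear_combination (-1 : ℝ × ℝ) * gold_sq

lemma fib_odd_succ_mul_gold_pow (n : ℕ) :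
    (Nat.fib (2 * (n + 1) + 1) : ℝ × ℝ) * gold ^ (2 * (n + 1)) =
      gold ^ 4 * (Nat.fib (2 * n + 1) * gold ^ (2 * n)) - gold := by
  rw [show 2 * (n + 1) + 1 = 2 * n + 2 + 1 by ring, fib_succ_eq_mul_add_one_sub_pow gold_sq,
    fib_succ_eq_mul_add_one_sub_pow gold_sq (2 * n + 1)]
  have h₁ := one_sub_gold_pow_mul_gold_pow (2 * n + 1)
  have h₂ := one_sub_gold_pow_mul_gold_pow (2 * n + 2)
  rw [pow_succ (-1 : ℝ × ℝ), (even_two_mul n).neg_one_pow] at h₁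
  rw [(show Even (2 * n + 2) from ⟨n + 1, by ring⟩).neg_one_pow] at h₂
  linear_combination gold ^ 2 * h₁ + h₂ - gold_sq

lemma fib_even_mul_gold_pow (n : ℕ) :
    (Nat.fib (2 * n + 2) : ℝ × ℝ) * gold ^ (2 * n) =
      gold * (Nat.fib (2 * n + 1) * gold ^ (2 * n)) - gold + 1 := by
  rw [fib_succ_eq_mul_add_one_sub_pow gold_sq]
  have h := one_sub_gold_pow_mul_gold_pow (2 * n)
  rw [(even_two_mul n).neg_one_pow] at h
  linear_combination (1 - gold) * h

lemma fib_odd_mul_gold_pow_snd_mem (n : ℕ) :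
    -ψ ≤ ((Nat.fib (2 * n + 1) : ℝ × ℝ) * gold ^ (2 * n)).2 ∧
      ((Nat.fib (2 * n + 1) : ℝ × ℝ) * gold ^ (2 * n)).2 ≤ 1 := by
  induction n with
  | zero => simp; linarith [neg_one_lt_goldenConj]
  | succ n ih =>
    rw [fib_odd_succ_mul_gold_pow]
    obtain ⟨hlo, hhi⟩ := snd_gold_pow_four_mul_sub_gold_mem ih.1 ih.2
    exact ⟨hlo, by linarith [goldenConj_lt_neg_three_fifths]⟩

lemma ncard_zeroReps_fib_odd (n : ℕ) :
    (zeroReps (Nat.fib (2 * n + 1) * gold ^ (2 * n))).ncard = Nat.fib (2 * n + 1) ∧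
      (zeroOneReps (Nat.fib (2 * n + 1) * gold ^ (2 * n))).ncard = Nat.fib (2 * n) := by
  induction n with
  | zero =>
    simp only [mul_zero, zero_add, Nat.fib_one, Nat.cast_one, pow_zero, one_mul, Nat.fib_zero]
    rw [ncard_zeroReps (by simp), ncard_zeroOneReps (by simp [goldenConj_neg.le]), sub_self,
      reps_zero, reps_one_sub_gold]
    simp
  | succ n ih =>
    obtain ⟨hlo, hhi⟩ := fib_odd_mul_gold_pow_snd_mem n
    obtain ⟨hA, hW⟩ := ncard_zeroReps_gold_pow_four_mul_sub_gold hlo hhi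
    rw [fib_odd_succ_mul_gold_pow, hA, hW, ih.1, ih.2,
      show 2 * (n + 1) + 1 = 2 * n + 1 + 2 by ring, show 2 * (n + 1) = 2 * n + 2 by ring,
      Nat.fib_add_two, Nat.fib_add_two]
    constructor <;> ring

lemma ncard_zeroReps_fib_even (n : ℕ) :
    (zeroReps (Nat.fib (2 * n + 2) * gold ^ (2 * n))).ncard = Nat.fib (2 * n + 1) := by
  rw [fib_even_mul_gold_pow,
    ncard_zeroReps_gold_mul_sub_add_one (fib_odd_mul_gold_pow_snd_mem n).2,
    (ncard_zeroReps_fib_odd n).1]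

/-! ### Digits indexed by `ℤ` -/

lemma exists_int_linear_zpow (i : ℤ) :
    ∃ a b : ℤ, ∀ x : ℝ, x ^ 2 = x + 1 → x ^ i = a * x + b := by
  induction i using Int.induction_on with
  | zero => exact ⟨0, 1, fun x _ => by simp⟩
  | succ i ih =>
    obtain ⟨a, b, h⟩ := ih
    refine ⟨a + b, a, fun x hx => ?_⟩
    have hx0 : x ≠ 0 := by rintro rfl; norm_num at hx
    rw [zpow_add_one₀ hx0, h x hx]
    push_cast
    linear_combination a * hx
  | pred i ih =>
    obtain ⟨a, b, h⟩ := ih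
    refine ⟨b, a - b, fun x hx => ?_⟩
    have hx0 : x ≠ 0 := by rintro rfl; norm_num at hx
    have hinv : x⁻¹ = x - 1 := inv_eq_of_mul_eq_one_right (by linear_combination hx)
    rw [zpow_sub_one₀ hx0, h x hx, hinv]
    push_cast
    linear_combination a * hx

lemma sum_goldenConj_zpow_eq {S : Finset ℤ} {m : ℤ} (h : ∑ i ∈ S, φ ^ i = m) :
    ∑ i ∈ S, ψ ^ i = m := by
  choose a b hab using exists_int_linear_zpow
  have hsum : ∀ x : ℝ, x ^ 2 = x + 1 →
      ∑ i ∈ S, x ^ i = (∑ i ∈ S, a i : ℤ) * x + ∑ i ∈ S, b i :=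
    fun x hx => by simp [hab _ x hx, sum_add_distrib, sum_mul]
  rw [hsum φ goldenRatio_sq] at h
  have ha : ∑ i ∈ S, a i = 0 := by
    by_contra ha
    have := (goldenRatio_irrational.intCast_mul ha).add_intCast (∑ i ∈ S, b i)
    rw [h] at this
    exact Int.not_irrational m this
  rw [hsum ψ goldenConj_sq, ← h, ha]
  simp

noncomputable def digitsFrom (k : ℤ) (S : Finset ℤ) : Finset ℕ :=
  S.preimage (fun t : ℕ => (t : ℤ) + k) fun _ _ _ _ h => by simpa using h

@[simp] lemma mem_digitsFrom {k : ℤ} {S : Finset ℤ} {t : ℕ} :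
    t ∈ digitsFrom k S ↔ (t : ℤ) + k ∈ S :=
  mem_preimage

lemma mem_of_digitsFrom_eq {S S' : Finset ℤ} {k i : ℤ} (h : digitsFrom k S = digitsFrom k S')
    (hi : i ∈ S) (hk : k ≤ i) : i ∈ S' := by
  have : (i - k).toNat ∈ digitsFrom k S := by simp [hk, hi]
  rw [h, mem_digitsFrom] at this
  simpa [hk] using this

lemma sum_zpow_eq_zpow_mul {x : ℝ} (hx : x ≠ 0) {S : Finset ℤ} {k : ℤ} (hS : ∀ i ∈ S, k ≤ i) :
    ∑ i ∈ S, x ^ i = x ^ k * ∑ t ∈ digitsFrom k S, x ^ t := by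
  rw [mul_sum, ← sum_preimage (fun t : ℕ => (t : ℤ) + k) S (fun _ _ _ _ h => by simpa using h)
    (fun i => x ^ i)]
  · exact sum_congr rfl fun t _ => by rw [zpow_add₀ hx, zpow_natCast, mul_comm]
  · intro i hi hne
    exact absurd ⟨(i - k).toNat, by simp [hS i hi]⟩ hne

lemma sum_digitsFrom_neg {x : ℝ} (hx : x ≠ 0) {S : Finset ℤ} {K : ℕ}
    (hS : ∀ i ∈ S, -(K : ℤ) ≤ i) :
    ∑ t ∈ digitsFrom (-K) S, x ^ t = x ^ K * ∑ i ∈ S, x ^ i := by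
  rw [sum_zpow_eq_zpow_mul hx hS, ← mul_assoc, ← zpow_natCast, ← zpow_add₀ hx, add_neg_cancel,
    zpow_zero, one_mul]

lemma value_digitsFrom {S : Finset ℤ} {K m : ℕ} (hS : ∀ i ∈ S, -(K : ℤ) ≤ i)
    (hsum : ∑ i ∈ S, φ ^ i = m) : value (digitsFrom (-K) S) = m * gold ^ K := by
  refine Prod.ext ?_ ?_
  · rw [value_fst, sum_digitsFrom_neg goldenRatio_ne_zero hS, hsum]
    simp [gold, mul_comm]
  · rw [value_snd, sum_digitsFrom_neg goldenConj_ne_zero hS,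
      sum_goldenConj_zpow_eq (m := m) (by exact_mod_cast hsum)]
    simp [gold, mul_comm]

lemma goldenConj_zpow_neg_mul_sum_mem {S : Finset ℤ} {k : ℤ} (hk : k ∈ S)
    (hmin : ∀ i ∈ S, k ≤ i) (hk1 : k + 1 ∉ S) :
    -ψ < ψ ^ (-k) * ∑ i ∈ S, ψ ^ i ∧ ψ ^ (-k) * ∑ i ∈ S, ψ ^ i < φ := by
  rw [sum_zpow_eq_zpow_mul goldenConj_ne_zero hmin, ← mul_assoc, ← zpow_add₀ goldenConj_ne_zero,
    neg_add_cancel, zpow_zero, one_mul, ← value_snd]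
  exact value_snd_mem_Ioo_of_one_notMem (by simpa using hk) (by simpa [add_comm] using hk1)

lemma eq_zero_of_goldenConj_zpow_mem {j : ℤ} (h₁ : 1 / 2 < ψ ^ j) (h₂ : ψ ^ j < φ ^ 2) :
    j = 0 := by
  have hψ : ψ = -φ⁻¹ := by rw [inv_goldenRatio, neg_neg]
  rcases Int.even_or_odd j with he | ho
  · rw [hψ, he.neg_zpow, inv_zpow'] at h₁ h₂
    have hm2 : φ ^ (-2 : ℤ) < 1 / 2 := by
      rw [zpow_neg, zpow_ofNat, ← inv_pow, inv_goldenRatio, neg_sq, goldenConj_sq]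
      linarith [goldenConj_lt_neg_three_fifths]
    have hlo := (zpow_lt_zpow_iff_right₀ one_lt_goldenRatio).1 (hm2.trans h₁)
    have hhi := (zpow_lt_zpow_iff_right₀ one_lt_goldenRatio).1 (h₂.trans_eq (zpow_ofNat φ 2).symm)
    obtain ⟨r, rfl⟩ := he
    norm_num at hlo hhi
    omega
  · rw [hψ, ho.neg_zpow] at h₁
    linarith [zpow_pos (inv_pos.2 goldenRatio_pos) j]

noncomputable def ofDigits (S : Finset ℤ) : ℤ →₀ ℕ := Finsupp.indicator S fun _ _ => 1

lemma ofDigits_apply (S : Finset ℤ) (i : ℤ) : ofDigits S i = if i ∈ S then 1 else 0 := by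
  classical
  simp [ofDigits, Finsupp.indicator_apply]

lemma support_ofDigits (S : Finset ℤ) : (ofDigits S).support = S := by
  ext i; simp [ofDigits_apply]

lemma ofDigits_support {a : ℤ →₀ ℕ} (h : ∀ i, a i ≤ 1) : ofDigits a.support = a := by
  ext i
  have := h i
  by_cases hi : a i = 0 <;> simp [ofDigits_apply, hi]; omega

end PhiExpansion

open PhiExpansion

lemma IsPhiRep.sum_support_eq {x : ℝ} {a : ℤ →₀ ℕ} (h : IsPhiRep x a) :
    ∑ i ∈ a.support, φ ^ i = x := by
  rw [h.2]
  refine sum_congr rfl fun i hi => ?_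
  rw [show a i = 1 by have := h.1 i; have := Finsupp.mem_support_iff.1 hi; omega]
  simp [phi]

lemma IsCanonRep.isLeast_neg {m K : ℕ} {a : ℤ →₀ ℕ} (ha : IsCanonRep m a)
    (hlo : -ψ ≤ m * ψ ^ K) (hhi : m * ψ ^ K ≤ -2 * ψ) : IsLeast {i | a i ≠ 0} (-K) := by
  have hsum := ha.1.sum_support_eq
  have hne : a.support.Nonempty := by
    rw [nonempty_iff_ne_empty]
    rintro h
    rw [h, sum_empty] at hsum
    rw [← hsum, zero_mul] at hlo
    linarith [goldenConj_neg]
  set k := a.support.min' hne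
  have hk : k ∈ a.support := a.support.min'_mem hne
  have hmin : ∀ i ∈ a.support, k ≤ i := fun i hi => a.support.min'_le i hi
  have hk1 : k + 1 ∉ a.support := by
    rw [Finsupp.mem_support_iff, not_not]
    exact (Nat.mul_eq_zero.1 (ha.2 k)).resolve_left (Finsupp.mem_support_iff.1 hk)
  -- `ψ ^ (-k) * m ∈ (-ψ, φ)` and `ψ ^ K * m ∈ [-ψ, -2ψ]` leave only `k = -K`.
  obtain ⟨h₁, h₂⟩ := goldenConj_zpow_neg_mul_sum_mem hk hmin hk1
  rw [sum_goldenConj_zpow_eq (m := m) (by exact_mod_cast hsum), Int.cast_natCast,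
    show -k = (-k - K) + K by ring, zpow_add₀ goldenConj_ne_zero, zpow_natCast, mul_assoc,
    mul_comm (ψ ^ K)] at h₁ h₂
  have hj := eq_zero_of_goldenConj_zpow_mem (j := -k - K) (by nlinarith [goldenConj_neg])
    (by nlinarith [goldenConj_neg, goldenRatio_mul_goldenConj, goldenRatio_sq])
  have hkK : k = -K := by omega
  rw [hkK] at hk hmin
  exact ⟨Finsupp.mem_support_iff.1 hk, fun i hi => hmin i (Finsupp.mem_support_iff.2 hi)⟩

lemma exists_mem_naturalSet_digitsFrom_eq {d : ℕ → ℤ →₀ ℕ} {m K : ℕ}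
    (hK : IsLeast {i | d m i ≠ 0} (-K)) {T : Finset ℕ} (hT : T ∈ zeroReps (m * gold ^ K)) :
    ∃ a ∈ naturalSet d m, digitsFrom (-K) a.support = T := by
  obtain ⟨h0, hT⟩ := hT
  set S := T.image fun t : ℕ => (t : ℤ) + -K
  have hdig : digitsFrom (-K) S = T := by ext t; simp [S]
  have hSmin : ∀ i ∈ S, -(K : ℤ) ≤ i := by simp [S]
  have hsum : ∑ i ∈ S, φ ^ i = m := by
    have := congrArg Prod.fst hT
    rw [← hdig, value_fst, sum_digitsFrom_neg goldenRatio_ne_zero hSmin] at this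
    simp only [gold, Prod.fst_mul, Prod.pow_fst, Prod.fst_natCast] at this
    exact mul_left_cancel₀ (pow_ne_zero K goldenRatio_ne_zero) (this.trans (mul_comm _ _))
  refine ⟨ofDigits S, ⟨⟨fun i => ?_, ?_⟩, -K, ⟨?_, fun i hi => ?_⟩, hK⟩, ?_⟩
  · rw [ofDigits_apply]; split_ifs <;> omega
  · rw [support_ofDigits, ← hsum]
    refine sum_congr rfl fun i hi => ?_
    simp [ofDigits_apply, hi, phi]
  · simpa [ofDigits_apply, S] using h0
  · rw [ofDigits_apply] at hi
    split_ifs at hi with h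
    · exact hSmin i h
    · exact absurd rfl hi
  · simp [support_ofDigits, hdig]

lemma naturalSet_bijOn {d : ℕ → ℤ →₀ ℕ} {m K : ℕ} (hd : IsCanonRep m (d m))
    (hlo : -ψ ≤ m * ψ ^ K) (hhi : m * ψ ^ K ≤ -2 * ψ) :
    Set.BijOn (fun a => digitsFrom (-K) a.support) (naturalSet d m) (zeroReps (m * gold ^ K)) := by
  have hK := hd.isLeast_neg hlo hhi
  have hnat : ∀ a ∈ naturalSet d m, IsPhiRep m a ∧ IsLeast {i | a i ≠ 0} (-K) := by
    rintro a ⟨ha, j, hja, hjd⟩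
    have hj : IsLeast {i | d m i ≠ 0} j := hjd
    obtain rfl := hj.unique hK
    exact ⟨ha, hja⟩
  refine ⟨fun a ha => ?_, fun a ha b hb hab => ?_,
    fun T hT => exists_mem_naturalSet_digitsFrom_eq hK hT⟩
  · obtain ⟨hrep, haK, hamin⟩ := hnat a ha
    exact ⟨by simpa using haK,
      value_digitsFrom (fun i hi => hamin (Finsupp.mem_support_iff.1 hi)) hrep.sum_support_eq⟩
  · obtain ⟨hra, -, hamin⟩ := hnat a ha
    obtain ⟨hrb, -, hbmin⟩ := hnat b hb
    have hsupp : a.support = b.support := by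
      ext i
      exact ⟨fun hi => mem_of_digitsFrom_eq hab hi (hamin (Finsupp.mem_support_iff.1 hi)),
        fun hi => mem_of_digitsFrom_eq hab.symm hi (hbmin (Finsupp.mem_support_iff.1 hi))⟩
    rw [← ofDigits_support hra.1, hsupp, ofDigits_support hrb.1]

lemma naturalSet_finite_ncard_eq {d : ℕ → ℤ →₀ ℕ} {m K : ℕ} (hd : IsCanonRep m (d m))
    (hlo : -ψ ≤ m * ψ ^ K) (hhi : m * ψ ^ K ≤ -2 * ψ) :
    (naturalSet d m).Finite ∧ (naturalSet d m).ncard = (zeroReps (m * gold ^ K)).ncard := by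
  have h := naturalSet_bijOn hd hlo hhi
  exact ⟨(h.image_eq ▸ zeroReps_finite _).of_finite_image h.injOn, h.ncard_eq⟩

/-- For `n ≥ 0`, the sets of natural expansions of `F_{2n+1}` and of `F_{2n+2}` are
finite and `ν(F_{2n+1}) = ν(F_{2n+2}) = F_{2n+1}`. Here `d n` denotes the canonical
φ-representation of `n`. -/
theorem natural_count_fib
    (d : ℕ → ℤ →₀ ℕ) (hd : ∀ n : ℕ, IsCanonRep n (d n)) (n : ℕ) :
    (naturalSet d (Nat.fib (2 * n + 1))).Finite ∧
      (naturalSet d (Nat.fib (2 * n + 2))).Finite ∧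
      (naturalSet d (Nat.fib (2 * n + 1))).ncard = Nat.fib (2 * n + 1) ∧
      (naturalSet d (Nat.fib (2 * n + 2))).ncard = Nat.fib (2 * n + 1) := by
  obtain ⟨hy₁, hy₂⟩ := fib_odd_mul_gold_pow_snd_mem n
  have hz := congrArg Prod.snd (fib_even_mul_gold_pow n)
  simp only [gold, Prod.snd_mul, Prod.snd_natCast, Prod.pow_snd, Prod.snd_sub, Prod.snd_add,
    Prod.snd_one] at hy₁ hy₂ hz
  have := goldenConj_lt_neg_three_fifths
  have h₁ := mul_le_mul_of_nonpos_left hy₁ goldenConj_neg.le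
  have h₂ := mul_le_mul_of_nonpos_left hy₂ goldenConj_neg.le
  obtain ⟨hfin₁, hcard₁⟩ := naturalSet_finite_ncard_eq (hd _) hy₁ (by linarith)
  obtain ⟨hfin₂, hcard₂⟩ := naturalSet_finite_ncard_eq (hd (Nat.fib (2 * n + 2))) (K := 2 * n)
    (by nlinarith [goldenConj_sq]) (by nlinarith [goldenConj_sq])
  exact ⟨hfin₁, hfin₂, hcard₁.trans (ncard_zeroReps_fib_odd n).1,
    hcard₂.trans (ncard_zeroReps_fib_even n)⟩
end

section
/- For every integer n ≥ 1, the sets of natural expansions of L_{2n+1} and of L_{2n} are finite, ν(L_{2n+1}) = 1, and ν(L_{2n}) = 2n. -/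
/-- Lucas numbers: L₀ = 2, L₁ = 1, L_{n+2} = L_{n+1} + L_n. -/
def lucas : ℕ → ℕ
  | 0 => 2
  | 1 => 1
  | n + 2 => lucas (n + 1) + lucas n

/-!
A digit function with digits in `{0, 1}` is identified with its support `S ⊆ ℤ`, of value
`Σ_{i ∈ S} φ^i`. Since `φ^(k+1) = φ^k + φ^(k-1)`, a top digit `φ^M` exceeds every nonadjacent
sum of lower powers, so nonadjacent supports are determined by their values; this identifies the
canonical expansions `{-2n, -2n + 2, …, 2n}` of `L_{2n+1} = φ^(2n+1) - φ^(-2n-1)` and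
`{-2n, 2n}` of `L_{2n} = φ^(2n) + φ^(-2n)`. If all indices of `S` are `≥ j`, then
`φ^M ≤ Σ_{i ∈ S} φ^i ≤ φ^(M+2) - φ^(j+1)` for the largest index `M`, so the value pins down `M`
up to one choice. Peeling off the top digit inductively shows that `L_{2n+1}` has no other natural
expansion, while those of `L_{2n}` are `{-2n, -2n + 2s} ∪ {-2n + 2r + 1 | s ≤ r < 2n}`,
`1 ≤ s ≤ 2n`.
-/

open Real

lemma one_lt_phi : 1 < phi := one_lt_goldenRatio

lemma phi_pos : 0 < phi := goldenRatio_pos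

lemma phi_zpow_succ (i : ℤ) : phi ^ (i + 1) = phi ^ i + phi ^ (i - 1) := by
  have h : phi ^ (i + 1) = phi ^ (i - 1) * phi ^ 2 := by
    rw [← zpow_natCast, ← zpow_add₀ phi_pos.ne']; ring_nf
  have h' : phi ^ i = phi ^ (i - 1) * phi := by
    rw [← zpow_add_one₀ phi_pos.ne', sub_add_cancel]
  rw [h, h', show phi ^ 2 = phi + 1 from goldenRatio_sq]
  ring

lemma lucas_eq_goldenRatio_pow_add_goldenConj_pow :
    ∀ m : ℕ, (lucas m : ℝ) = goldenRatio ^ m + goldenConj ^ m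
  | 0 => by norm_num [lucas]
  | 1 => by simp [lucas, goldenRatio_add_goldenConj]
  | m + 2 => by
    rw [lucas, Nat.cast_add, lucas_eq_goldenRatio_pow_add_goldenConj_pow (m + 1),
      lucas_eq_goldenRatio_pow_add_goldenConj_pow m]
    linear_combination -goldenRatio ^ m * goldenRatio_sq - goldenConj ^ m * goldenConj_sq

lemma goldenConj_eq_neg_inv_phi : goldenConj = -phi⁻¹ := by
  rw [phi, ← goldenRatio, inv_goldenRatio, neg_neg]

lemma lucas_two_mul (n : ℕ) :
    (lucas (2 * n) : ℝ) = phi ^ (2 * n : ℤ) + phi ^ (-(2 * n : ℤ)) := by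
  rw [lucas_eq_goldenRatio_pow_add_goldenConj_pow, goldenConj_eq_neg_inv_phi,
    (even_two_mul n).neg_pow, zpow_neg, inv_pow, ← zpow_natCast]
  push_cast
  rfl

lemma lucas_two_mul_add_one (n : ℕ) :
    (lucas (2 * n + 1) : ℝ) = phi ^ (2 * n + 1 : ℤ) - phi ^ (-(2 * n + 1 : ℤ)) := by
  rw [lucas_eq_goldenRatio_pow_add_goldenConj_pow, goldenConj_eq_neg_inv_phi,
    (odd_two_mul_add_one n).neg_pow, zpow_neg, inv_pow, ← zpow_natCast, ← sub_eq_add_neg]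
  push_cast
  rfl

noncomputable def phiValue (S : Finset ℤ) : ℝ := ∑ i ∈ S, phi ^ i

section PhiValue

variable {S : Finset ℤ} {i j K : ℤ}

lemma phiValue_empty : phiValue ∅ = 0 := Finset.sum_empty

lemma phiValue_insert (h : i ∉ S) : phiValue (insert i S) = phi ^ i + phiValue S :=
  Finset.sum_insert h

lemma phiValue_erase (h : i ∈ S) : phiValue (S.erase i) = phiValue S - phi ^ i :=
  Finset.sum_erase_eq_sub h

lemma zpow_le_phiValue (h : i ∈ S) : phi ^ i ≤ phiValue S :=
  Finset.single_le_sum (fun k _ => (zpow_pos phi_pos k).le) h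

lemma nonempty_of_phiValue_pos (h : 0 < phiValue S) : S.Nonempty :=
  Finset.nonempty_of_sum_ne_zero h.ne'

lemma eq_empty_of_phiValue_lt (hj : ∀ i ∈ S, j ≤ i) (h : phiValue S < phi ^ j) : S = ∅ :=
  Finset.eq_empty_of_forall_notMem fun i hi =>
    ((zpow_le_zpow_right₀ one_lt_phi.le (hj i hi)).trans (zpow_le_phiValue hi)).not_gt h

/-- The bound is the value `φ^j + ⋯ + φ^(K-1)` of the whole interval `[j, K)`. -/
lemma phiValue_le (hj : ∀ i ∈ S, j ≤ i) (hK : ∀ i ∈ S, i < K) (hjK : j ≤ K) :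
    phiValue S ≤ phi ^ (K + 1) - phi ^ (j + 1) := by
  induction S using Finset.induction_on_max generalizing K with
  | empty =>
    rw [phiValue_empty, sub_nonneg]
    exact zpow_le_zpow_right₀ one_lt_phi.le (by omega)
  | insert a s hlt ih =>
    have ha : j ≤ a := hj a (Finset.mem_insert_self a s)
    have hs : phiValue s ≤ phi ^ (a + 1) - phi ^ (j + 1) :=
      ih (fun i hi => hj i (Finset.mem_insert_of_mem hi)) hlt ha
    have hmono : phi ^ (a + 2) ≤ phi ^ (K + 1) :=
      zpow_le_zpow_right₀ one_lt_phi.le (by linarith [hK a (Finset.mem_insert_self a s)])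
    have hrec := phi_zpow_succ (a + 1)
    rw [add_sub_cancel_right, add_assoc, one_add_one_eq_two] at hrec
    rw [phiValue_insert fun h => (hlt a h).false]
    linarith

lemma max'_le_of_phiValue_lt (hne : S.Nonempty) (h : phiValue S < phi ^ (K + 1)) :
    S.max' hne ≤ K :=
  Int.lt_add_one_iff.1 <| (zpow_lt_zpow_iff_right₀ one_lt_phi).1 <|
    (zpow_le_phiValue (S.max'_mem hne)).trans_lt h

lemma le_max'_of_lt_phiValue (hne : S.Nonempty) (hj : ∀ i ∈ S, j ≤ i)
    (h : phi ^ (K + 1) - phi ^ (j + 1) < phiValue S) : K ≤ S.max' hne := by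
  have hle := phiValue_le hj (K := S.max' hne + 1)
    (fun i hi => Int.lt_add_one_iff.2 (S.le_max' i hi)) (by linarith [hj _ (S.max'_mem hne)])
  have hlt : phi ^ (K + 1) < phi ^ (S.max' hne + 1 + 1) := by linarith
  have := (zpow_lt_zpow_iff_right₀ one_lt_phi).1 hlt
  omega

end PhiValue

def Nonadjacent (S : Finset ℤ) : Prop := ∀ i ∈ S, i + 1 ∉ S

lemma Nonadjacent.mono {S T : Finset ℤ} (hT : Nonadjacent T) (h : S ⊆ T) : Nonadjacent S :=
  fun i hi hi' => hT i (h hi) (h hi')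

lemma Nonadjacent.phiValue_lt {S : Finset ℤ} {K : ℤ} (hS : Nonadjacent S)
    (hK : ∀ i ∈ S, i < K) : phiValue S < phi ^ K := by
  induction S using Finset.induction_on_max generalizing K with
  | empty => exact phiValue_empty ▸ zpow_pos phi_pos K
  | insert a s hlt ih =>
    have hs : phiValue s < phi ^ (a - 1) := by
      refine ih (hS.mono (Finset.subset_insert a s)) fun i hi => ?_
      have : i ≠ a - 1 := by
        rintro rfl
        exact hS (a - 1) (Finset.mem_insert_of_mem hi) (by simp)
      have := hlt i hi
      omega
    have hmono : phi ^ (a + 1) ≤ phi ^ K :=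
      zpow_le_zpow_right₀ one_lt_phi.le (hK a (Finset.mem_insert_self a s))
    rw [phiValue_insert fun h => (hlt a h).false]
    linarith [phi_zpow_succ a]

/-- Compare the largest index on which `S` and `T` differ: the side lacking it is nonadjacent
below it, hence has the strictly smaller value. -/
lemma Nonadjacent.eq_of_phiValue_eq {S T : Finset ℤ} (hS : Nonadjacent S) (hT : Nonadjacent T)
    (h : phiValue S = phiValue T) : S = T := by
  by_contra hne
  have hdiff : phiValue (S \ T) = phiValue (T \ S) :=
    sub_eq_zero.1 ((Finset.sum_sdiff_sub_sum_sdiff (f := fun i => phi ^ i)).trans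
      (sub_eq_zero.2 h))
  have hU : (S \ T ∪ T \ S).Nonempty := by
    rw [Finset.nonempty_iff_ne_empty, Ne, Finset.union_eq_empty, Finset.sdiff_eq_empty_iff_subset,
      Finset.sdiff_eq_empty_iff_subset]
    exact fun h => hne (Finset.Subset.antisymm h.1 h.2)
  obtain ⟨M, hM, hle⟩ : ∃ M ∈ S \ T ∪ T \ S, ∀ i ∈ S \ T ∪ T \ S, i ≤ M :=
    ⟨_, Finset.max'_mem _ hU, fun i hi => Finset.le_max' _ i hi⟩
  have below : ∀ {A B : Finset ℤ}, M ∈ A \ B → B \ A ⊆ S \ T ∪ T \ S → ∀ i ∈ B \ A, i < M :=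
    fun hMA hsub i hi => (hle i (hsub hi)).lt_of_ne <| by
      rintro rfl
      exact (Finset.mem_sdiff.1 hMA).2 (Finset.mem_sdiff.1 hi).1
  rcases Finset.mem_union.1 hM with hM | hM
  · refine (((hT.mono Finset.sdiff_subset).phiValue_lt ?_).trans_le (zpow_le_phiValue hM)).ne' hdiff
    exact below hM Finset.subset_union_right
  · refine (((hS.mono Finset.sdiff_subset).phiValue_lt ?_).trans_le (zpow_le_phiValue hM)).ne hdiff
    exact below hM Finset.subset_union_left

noncomputable def digitsOf (S : Finset ℤ) : ℤ →₀ ℕ := Multiset.toFinsupp S.val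

lemma support_digitsOf (S : Finset ℤ) : (digitsOf S).support = S :=
  Finset.val_toFinset S

lemma digitsOf_apply (S : Finset ℤ) (i : ℤ) : digitsOf S i = if i ∈ S then 1 else 0 :=
  Multiset.count_eq_of_nodup S.nodup

lemma digitsOf_injective : Function.Injective digitsOf := fun S T h => by
  rw [← support_digitsOf S, h, support_digitsOf]

lemma digitsOf_support {a : ℤ →₀ ℕ} (h : ∀ i, a i ≤ 1) : digitsOf a.support = a := by
  ext i
  rw [digitsOf_apply]
  split_ifs with hi
  · have := Finsupp.mem_support_iff.1 hi
    have := h i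
    omega
  · exact (Finsupp.notMem_support_iff.1 hi).symm

lemma IsPhiRep.eq_phiValue {x : ℝ} {a : ℤ →₀ ℕ} (h : IsPhiRep x a) :
    x = phiValue a.support := by
  rw [h.2, phiValue]
  refine Finset.sum_congr rfl fun i hi => ?_
  rw [show a i = 1 by have := h.1 i; have := Finsupp.mem_support_iff.1 hi; omega]
  simp

lemma isPhiRep_digitsOf {x : ℝ} {S : Finset ℤ} (h : x = phiValue S) :
    IsPhiRep x (digitsOf S) := by
  refine ⟨fun i => by rw [digitsOf_apply]; split_ifs <;> simp, ?_⟩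
  rw [h, support_digitsOf, phiValue]
  exact Finset.sum_congr rfl fun i hi => by simp [digitsOf_apply, hi]

lemma IsCanonRep.nonadjacent {x : ℝ} {a : ℤ →₀ ℕ} (h : IsCanonRep x a) :
    Nonadjacent a.support := fun i hi hi' =>
  mul_ne_zero (Finsupp.mem_support_iff.1 hi) (Finsupp.mem_support_iff.1 hi') (h.2 i)

lemma isLeast_support_iff {a : ℤ →₀ ℕ} {j : ℤ} :
    IsLeast (a.support : Set ℤ) j ↔ a j ≠ 0 ∧ ∀ i, a i ≠ 0 → j ≤ i := by
  simp [IsLeast, lowerBounds]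

lemma naturalSet_eq_image {d : ℕ → ℤ →₀ ℕ} {m : ℕ} (hd : IsCanonRep m (d m))
    {T : Finset ℤ} {j : ℤ} (hT : Nonadjacent T) (hTm : phiValue T = m)
    (hj : IsLeast (T : Set ℤ) j) :
    naturalSet d m = digitsOf '' {S | phiValue S = m ∧ IsLeast (S : Set ℤ) j} := by
  have hsupp : (d m).support = T :=
    hd.nonadjacent.eq_of_phiValue_eq hT (hd.1.eq_phiValue.symm.trans hTm.symm)
  ext a
  simp only [naturalSet, ← isLeast_support_iff, hsupp, Set.mem_image]
  constructor
  · rintro ⟨ha, k, hk, hkT⟩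
    obtain rfl := hkT.unique hj
    exact ⟨a.support, ⟨ha.eq_phiValue.symm, hk⟩, digitsOf_support ha.1⟩
  · rintro ⟨S, ⟨hS, hSj⟩, rfl⟩
    exact ⟨isPhiRep_digitsOf hS.symm, j, by rwa [support_digitsOf], hj⟩

def evenRun (j : ℤ) (t : ℕ) : Finset ℤ := (Finset.range t).image fun k : ℕ => j + 2 * k

section EvenRun

variable {S : Finset ℤ} {j : ℤ}

lemma mem_evenRun {t : ℕ} {i : ℤ} :
    i ∈ evenRun j t ↔ ∃ k : ℕ, k < t ∧ j + 2 * k = i := by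
  simp [evenRun]

lemma evenRun_succ (t : ℕ) : evenRun j (t + 1) = insert (j + 2 * t) (evenRun j t) := by
  rw [evenRun, Finset.range_add_one, Finset.image_insert, evenRun]

lemma isLeast_evenRun {t : ℕ} (ht : t ≠ 0) : IsLeast (evenRun j t : Set ℤ) j := by
  refine ⟨mem_evenRun.2 ⟨0, by omega, by simp⟩, fun i hi => ?_⟩
  obtain ⟨k, -, rfl⟩ := mem_evenRun.1 hi
  omega

lemma nonadjacent_evenRun (t : ℕ) : Nonadjacent (evenRun j t) := by
  intro i hi hi'
  obtain ⟨k, -, rfl⟩ := mem_evenRun.1 hi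
  obtain ⟨l, -, hl⟩ := mem_evenRun.1 hi'
  omega

lemma phiValue_evenRun (t : ℕ) :
    phiValue (evenRun j t) = phi ^ (j + 2 * t - 1) - phi ^ (j - 1) := by
  induction t with
  | zero => simp [evenRun, phiValue_empty]
  | succ t ih =>
    have hnot : j + 2 * t ∉ evenRun j t := fun h => by
      obtain ⟨k, hk, hk'⟩ := mem_evenRun.1 h
      omega
    rw [evenRun_succ, phiValue_insert hnot, ih, Nat.cast_succ,
      show j + 2 * ((t : ℤ) + 1) - 1 = j + 2 * t + 1 by ring, phi_zpow_succ]
    ring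

lemma eq_evenRun_of_phiValue_eq (hj : ∀ i ∈ S, j ≤ i) {t : ℕ}
    (hv : phiValue S = phi ^ (j + 2 * t - 1) - phi ^ (j - 1)) : S = evenRun j t := by
  induction t generalizing S with
  | zero =>
    simp only [Nat.cast_zero, mul_zero, add_zero, sub_self] at hv
    exact (eq_empty_of_phiValue_lt hj (hv ▸ zpow_pos phi_pos j)).trans
      (by simp [evenRun])
  | succ t ih =>
    set K := j + 2 * (t : ℤ)
    have hv' : phiValue S = phi ^ (K + 1) - phi ^ (j - 1) := by
      rw [hv, Nat.cast_succ, show j + 2 * ((t : ℤ) + 1) - 1 = K + 1 by ring]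
    have hlt : phi ^ (j - 1) < phi ^ (K + 1) := zpow_lt_zpow_right₀ one_lt_phi (by omega)
    have hne : S.Nonempty := nonempty_of_phiValue_pos (by linarith)
    have hM : S.max' hne = K := by
      refine le_antisymm (max'_le_of_phiValue_lt hne ?_) (le_max'_of_lt_phiValue hne hj ?_)
      · linarith [zpow_pos phi_pos (j - 1)]
      · linarith [zpow_lt_zpow_right₀ one_lt_phi (show j - 1 < j + 1 by omega)]
    have hK : K ∈ S := hM ▸ S.max'_mem hne
    have herase : S.erase K = evenRun j t := by
      refine ih (fun i hi => hj i (Finset.mem_of_mem_erase hi)) ?_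
      rw [phiValue_erase hK, hv', phi_zpow_succ]
      ring
    rw [evenRun_succ, ← herase, Finset.insert_erase hK]

lemma eq_singleton_of_phiValue_eq (hj : ∀ i ∈ S, j ≤ i) (hv : phiValue S = phi ^ j) :
    S = {j} := by
  refine (eq_evenRun_of_phiValue_eq hj (t := 1) ?_).trans (by simp [evenRun])
  rw [hv, Nat.cast_one, mul_one, show j + 2 - 1 = j + 1 by ring, phi_zpow_succ]
  ring

end EvenRun

/-- The expansions of `φ^j + φ^(j+2t)` obtained from `{j, j + 2t}` by unfolding the top digit
`t - s` times with `φ^(k+1) = φ^k + φ^(k-1)`. -/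
def splitRun (j : ℤ) (s t : ℕ) : Finset ℤ :=
  insert j (insert (j + 2 * s) ((Finset.Ico s t).image fun r : ℕ => j + 2 * r + 1))

section SplitRun

variable {S : Finset ℤ} {j : ℤ}

lemma mem_splitRun {s t : ℕ} {i : ℤ} :
    i ∈ splitRun j s t ↔
      i = j ∨ i = j + 2 * s ∨ ∃ r : ℕ, (s ≤ r ∧ r < t) ∧ j + 2 * r + 1 = i := by
  simp [splitRun]

lemma splitRun_self (t : ℕ) : splitRun j t t = {j, j + 2 * t} := by
  simp [splitRun]

lemma splitRun_succ {s t : ℕ} (hst : s ≤ t) :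
    splitRun j s (t + 1) = insert (j + 2 * t + 1) (splitRun j s t) := by
  rw [splitRun, splitRun, Nat.Ico_succ_right_eq_insert_Ico hst, Finset.image_insert,
    Finset.insert_comm (j + 2 * s), Finset.insert_comm j]

lemma isLeast_splitRun (s t : ℕ) : IsLeast (splitRun j s t : Set ℤ) j := by
  refine ⟨Finset.mem_insert_self _ _, fun i hi => ?_⟩
  rcases mem_splitRun.1 hi with rfl | rfl | ⟨r, -, rfl⟩ <;> omega

lemma nonadjacent_splitRun_self (t : ℕ) : Nonadjacent (splitRun j t t) := by
  rw [splitRun_self]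
  intro i hi hi'
  simp only [Finset.mem_insert, Finset.mem_singleton] at hi hi'
  omega

lemma phiValue_splitRun {s t : ℕ} (hs : 1 ≤ s) (hst : s ≤ t) :
    phiValue (splitRun j s t) = phi ^ (j + 2 * t) + phi ^ j := by
  induction t, hst using Nat.le_induction with
  | base =>
    rw [splitRun_self, phiValue_insert (by simp; omega), phiValue, Finset.sum_singleton]
    ring
  | succ t hst ih =>
    have hnot : j + 2 * t + 1 ∉ splitRun j s t := fun h => by
      rcases mem_splitRun.1 h with h | h | ⟨r, hr, h⟩ <;> omega
    rw [splitRun_succ hst, phiValue_insert hnot, ih, Nat.cast_succ,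
      show j + 2 * ((t : ℤ) + 1) = j + 2 * t + 1 + 1 by ring, phi_zpow_succ (j + 2 * t + 1),
      add_sub_cancel_right]
    ring

lemma splitRun_injOn (t : ℕ) : Set.InjOn (fun s => splitRun j s t) (Set.Icc 1 t) := by
  intro s hs s' _ h
  replace h : splitRun j s t = splitRun j s' t := h
  have hmem : j + 2 * s ∈ splitRun j s' t := h ▸ mem_splitRun.2 (Or.inr (Or.inl rfl))
  have := hs.1
  rcases mem_splitRun.1 hmem with h | h | ⟨r, -, h⟩ <;> omega

lemma phiValue_ne_zpow_add_self (hj : ∀ i ∈ S, j ≤ i) : phiValue S ≠ phi ^ j + phi ^ j := by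
  intro hv
  have hpos := zpow_pos phi_pos (j - 1)
  have hrec : phi ^ (j + 1) = phi ^ j + phi ^ (j - 1) := phi_zpow_succ j
  have hlt : phi ^ (j - 1) < phi ^ j := zpow_lt_zpow_right₀ one_lt_phi (by omega)
  have hne : S.Nonempty := nonempty_of_phiValue_pos (by linarith)
  obtain ⟨M, hM, hMj, hM_le⟩ : ∃ M ∈ S, j ≤ M ∧ M ≤ j + 1 := by
    refine ⟨S.max' hne, S.max'_mem hne, hj _ (S.max'_mem hne), max'_le_of_phiValue_lt hne ?_⟩
    rw [phi_zpow_succ, add_sub_cancel_right, hrec]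
    linarith
  have herase := phiValue_erase hM
  rcases (show M = j ∨ M = j + 1 by omega) with rfl | rfl
  · have hempty : S.erase M = ∅ := by
      refine eq_empty_of_phiValue_lt (j := M + 1) (fun i hi => ?_) ?_
      · have := hj i (Finset.mem_of_mem_erase hi)
        have := Finset.ne_of_mem_erase hi
        omega
      · rw [herase, hv, hrec, add_sub_cancel_right]
        linarith
    rw [hempty, phiValue_empty, hv] at herase
    linarith
  · have hempty : S.erase (j + 1) = ∅ :=
      eq_empty_of_phiValue_lt (fun i hi => hj i (Finset.mem_of_mem_erase hi))
        (by rw [herase, hv, hrec]; linarith)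
    rw [hempty, phiValue_empty, hv, hrec] at herase
    linarith

lemma exists_eq_splitRun_of_phiValue_eq (hj : ∀ i ∈ S, j ≤ i) {t : ℕ}
    (hv : phiValue S = phi ^ (j + 2 * t) + phi ^ j) :
    ∃ s ∈ Set.Icc 1 t, S = splitRun j s t := by
  induction t generalizing S with
  | zero =>
    simp only [Nat.cast_zero, mul_zero, add_zero] at hv
    exact absurd hv (phiValue_ne_zpow_add_self hj)
  | succ t ih =>
    set K := j + 2 * (t : ℤ)
    have hv' : phiValue S = phi ^ (K + 1 + 1) + phi ^ j := by
      rw [hv, Nat.cast_succ, show j + 2 * ((t : ℤ) + 1) = K + 1 + 1 by ring]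
    have hrec := phi_zpow_succ (K + 1)
    rw [add_sub_cancel_right] at hrec
    have hpos := zpow_pos phi_pos j
    have hlt : phi ^ j < phi ^ (K + 1) := zpow_lt_zpow_right₀ one_lt_phi (by omega)
    have hne : S.Nonempty := nonempty_of_phiValue_pos (by linarith [zpow_pos phi_pos (K + 1 + 1)])
    obtain ⟨M, hM, hM_ge, hM_le⟩ : ∃ M ∈ S, K + 1 ≤ M ∧ M ≤ K + 1 + 1 := by
      refine ⟨S.max' hne, S.max'_mem hne,
        le_max'_of_lt_phiValue hne hj (by linarith [zpow_pos phi_pos (j + 1)]),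
        max'_le_of_phiValue_lt hne ?_⟩
      rw [phi_zpow_succ, add_sub_cancel_right, hv']
      linarith
    have herase := phiValue_erase hM
    have hj' : ∀ i ∈ S.erase M, j ≤ i := fun i hi => hj i (Finset.mem_of_mem_erase hi)
    rcases (show M = K + 1 ∨ M = K + 1 + 1 by omega) with rfl | rfl
    · obtain ⟨s, hs, hS⟩ := ih hj' (by rw [herase, hv', hrec]; ring)
      refine ⟨s, ⟨hs.1, hs.2.trans t.le_succ⟩, ?_⟩
      rw [splitRun_succ hs.2, ← hS, Finset.insert_erase hM]
    · have hS := eq_singleton_of_phiValue_eq hj' (by rw [herase, hv']; ring)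
      refine ⟨t + 1, ⟨by omega, le_rfl⟩, ?_⟩
      rw [splitRun_self, ← Finset.insert_erase hM, hS, Finset.pair_comm, Nat.cast_succ,
        show j + 2 * ((t : ℤ) + 1) = K + 1 + 1 by ring]

end SplitRun

lemma naturalSet_lucas_odd {d : ℕ → ℤ →₀ ℕ} (n : ℕ)
    (hd : IsCanonRep (lucas (2 * n + 1)) (d (lucas (2 * n + 1)))) :
    naturalSet d (lucas (2 * n + 1)) = {digitsOf (evenRun (-(2 * n)) (2 * n + 1))} := by
  have hval : phiValue (evenRun (-(2 * n)) (2 * n + 1)) = lucas (2 * n + 1) := by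
    rw [phiValue_evenRun, lucas_two_mul_add_one]
    push_cast
    ring_nf
  have hleast := isLeast_evenRun (j := -(2 * n)) (Nat.succ_ne_zero (2 * n))
  rw [naturalSet_eq_image hd (nonadjacent_evenRun _) hval hleast, ← Set.image_singleton]
  congr 1
  ext S
  refine ⟨fun ⟨hS, hSj⟩ => ?_, fun hS => hS ▸ ⟨hval, hleast⟩⟩
  exact eq_evenRun_of_phiValue_eq (fun i hi => hSj.2 hi) (by rw [hS, ← hval, phiValue_evenRun])

lemma naturalSet_lucas_even {d : ℕ → ℤ →₀ ℕ} {n : ℕ} (hn : 1 ≤ n)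
    (hd : IsCanonRep (lucas (2 * n)) (d (lucas (2 * n)))) :
    naturalSet d (lucas (2 * n)) =
      (digitsOf ∘ fun s => splitRun (-(2 * n)) s (2 * n)) '' Set.Icc 1 (2 * n) := by
  have hlucas : (lucas (2 * n) : ℝ) =
      phi ^ (-(2 * n : ℤ) + 2 * (2 * n : ℕ)) + phi ^ (-(2 * n : ℤ)) := by
    rw [lucas_two_mul]
    push_cast
    ring_nf
  have hval : ∀ s ∈ Set.Icc 1 (2 * n),
      phiValue (splitRun (-(2 * n)) s (2 * n)) = lucas (2 * n) := fun s hs => by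
    rw [phiValue_splitRun hs.1 hs.2, hlucas]
  rw [naturalSet_eq_image hd (nonadjacent_splitRun_self _) (hval _ ⟨by omega, le_rfl⟩)
    (isLeast_splitRun _ _), Set.image_comp]
  congr 1
  ext S
  refine ⟨fun ⟨hS, hSj⟩ => ?_, fun ⟨s, hs, hS⟩ => hS ▸ ⟨hval s hs, isLeast_splitRun _ _⟩⟩
  obtain ⟨s, hs, rfl⟩ :=
    exists_eq_splitRun_of_phiValue_eq (fun i hi => hSj.2 hi) (hS.trans hlucas)
  exact ⟨s, hs, rfl⟩

/-- For `n ≥ 1`, the sets of natural expansions of `L_{2n+1}` and of `L_{2n}` are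
finite, `ν(L_{2n+1}) = 1`, and `ν(L_{2n}) = 2n`. Here `d n` denotes the canonical
φ-representation of `n`. -/
theorem natural_count_lucas
    (d : ℕ → ℤ →₀ ℕ) (hd : ∀ n : ℕ, IsCanonRep n (d n)) (n : ℕ) (hn : 1 ≤ n) :
    (naturalSet d (lucas (2 * n + 1))).Finite ∧
      (naturalSet d (lucas (2 * n))).Finite ∧
      (naturalSet d (lucas (2 * n + 1))).ncard = 1 ∧
      (naturalSet d (lucas (2 * n))).ncard = 2 * n := by
  rw [naturalSet_lucas_odd n (hd _), naturalSet_lucas_even hn (hd _)]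
  have hinj := digitsOf_injective.comp_injOn (splitRun_injOn (j := -(2 * n)) (2 * n))
  refine ⟨Set.finite_singleton _, (Set.finite_Icc _ _).image _, Set.ncard_singleton _, ?_⟩
  rw [hinj.ncard_image, Set.ncard_Icc_nat]
  omega
end
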